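/- arXiv:2302.00978 — 16 statements merged into one kernel-verified Lean document; each statement's English description precedes it below -/
import Mathlib

section
/- Let c be a choice function on a finite nonempty set X. For every switch (A,B) for c there exist a menu C and an element x ∈ X such that A ⊆ C∖{x} ⊆ C ⊆ B and (C∖{x},C) is a minimal switch for c. -/
/-- For every switch (A,B) for a choice function c there exist a menu C and an
element x such that A ⊆ C∖{x} ⊆ C ⊆ B and (C∖{x},C) is a minimal switch for c. -/
theorem stmt_0 {α : Type*} [Fintype α] [DecidableEq α] [Nonempty α]
    (c : Finset α → α) (hc : ∀ A : Finset α, A.Nonempty → c A ∈ A)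
    (A B : Finset α) (hA : A.Nonempty) (hAB : A ⊆ B)
    (hswitch : c A ≠ c B ∧ c B ∈ A) :
    ∃ (C : Finset α) (x : α), x ∈ C ∧ A ⊆ C.erase x ∧ C ⊆ B ∧
      (C.erase x).Nonempty ∧ x ≠ c C ∧ c C ≠ c (C.erase x) := by
  induction B using Finset.strongInduction with
  | _ B ih =>
    obtain ⟨hne, hmem⟩ := hswitch
    have hAB' : A ⊂ B := by
      refine ⟨hAB, fun hBA => hne ?_⟩
      have : A = B := le_antisymm hAB hBA
      rw [this]
    obtain ⟨x, hxB, hxA⟩ := Finset.exists_of_ssubset hAB'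
    have hAsub : A ⊆ B.erase x := Finset.subset_erase.mpr ⟨hAB, hxA⟩
    by_cases h : c (B.erase x) = c B
    · obtain ⟨C, y, hyC, hAC, hCB, hCne, hyc, hcc⟩ :=
        ih (B.erase x) (Finset.erase_ssubset hxB) hAsub ⟨by rw [h]; exact hne, by rw [h]; exact hmem⟩
      exact ⟨C, y, hyC, hAC, hCB.trans (Finset.erase_subset _ _), hCne, hyc, hcc⟩
    · refine ⟨B, x, hxB, hAsub, subset_rfl, hA.mono hAsub, ?_, Ne.symm h⟩
      exact fun hx => hxA (hx ▸ hmem)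
end

section
/- A choice function c on a finite nonempty set X is with rational limited consideration (RLC) if and only if it is a shortlisting (SL). That is: there exist a linear order ▷ on X and a choice correspondence Γ on X satisfying Axiom α, Axiom γ and Axiom δ such that c(A) = max(Γ(A),▷) for every menu A, if and only if there exist a partial order P on X and a linear order ▷ on X such that c(A) = max(max(A,P),▷) for every menu A. -/
variable {α : Type*}

/-- max(S,≻): the elements of S that no element of S beats. -/
def maxSet (r : α → α → Prop) (S : Set α) : Set α := {z | z ∈ S ∧ ∀ w ∈ S, ¬ r w z}

/-- A linear order: asymmetric, transitive and complete binary relation. -/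
def IsLinearRel (r : α → α → Prop) : Prop :=
  (∀ x y, r x y → ¬ r y x) ∧ (∀ x y z, r x y → r y z → r x z) ∧
    (∀ x y, x ≠ y → r x y ∨ r y x)

/-- A partial order: asymmetric and transitive binary relation. -/
def IsPartialRel (r : α → α → Prop) : Prop :=
  (∀ x y, r x y → ¬ r y x) ∧ (∀ x y z, r x y → r y z → r x z)

/-- A choice correspondence: assigns to each menu a nonempty subset of it. -/
def IsChoiceCorr (Γ : Finset α → Set α) : Prop :=
  ∀ A : Finset α, A.Nonempty → (Γ A).Nonempty ∧ Γ A ⊆ ↑A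

/-- Axiom α for choice correspondences. -/
def AxiomAlpha (Γ : Finset α → Set α) : Prop :=
  ∀ A B : Finset α, A.Nonempty → A ⊆ B → ∀ x : α, x ∈ A → x ∈ Γ B → x ∈ Γ A

/-- Axiom γ for choice correspondences. -/
def AxiomGamma [DecidableEq α] (Γ : Finset α → Set α) : Prop :=
  ∀ A B : Finset α, A.Nonempty → B.Nonempty → ∀ x : α, x ∈ A → x ∈ B →
    x ∈ Γ A → x ∈ Γ B → x ∈ Γ (A ∪ B)

/-- Axiom δ for choice correspondences. -/
def AxiomDelta (Γ : Finset α → Set α) : Prop :=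
  ∀ A B : Finset α, A.Nonempty → A ⊆ B → ∀ x y : α, x ∈ Γ A → y ∈ Γ A → x ≠ y →
    Γ B ≠ {x} ∧ Γ B ≠ {y}


lemma exists_maximal_finset [DecidableEq α] {P : α → α → Prop} (hP : IsPartialRel P) :
    ∀ (A : Finset α), A.Nonempty → ∃ x ∈ A, ∀ w ∈ A, ¬ P w x := by
  intro A
  induction A using Finset.induction_on with
  | empty => intro h; simp at h
  | @insert a s ha ih =>
    intro _
    rcases s.eq_empty_or_nonempty with rfl | hs
    · refine ⟨a, by simp, ?_⟩
      intro w hw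
      simp only [Finset.mem_insert, Finset.notMem_empty, or_false] at hw
      subst hw; exact fun h => hP.1 _ _ h h
    · obtain ⟨x, hx, hxmax⟩ := ih hs
      by_cases hax : P a x
      · refine ⟨a, Finset.mem_insert_self _ _, ?_⟩
        intro w hw
        rcases Finset.mem_insert.mp hw with rfl | hw
        · exact fun h => hP.1 _ _ h h
        · exact fun h => hxmax w hw (hP.2 _ _ _ h hax)
      · refine ⟨x, Finset.mem_insert_of_mem hx, ?_⟩
        intro w hw
        rcases Finset.mem_insert.mp hw with rfl | hw
        · exact hax
        · exact hxmax w hw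

lemma exists_max_above [DecidableEq α] {P : α → α → Prop} (hP : IsPartialRel P)
    (A : Finset α) {y : α} (hy : y ∈ A) :
    ∃ x, x ∈ maxSet P ↑A ∧ (x = y ∨ P x y) := by
  classical
  set D := A.filter (fun w => w = y ∨ P w y) with hD
  have hyD : y ∈ D := by simp [hD, hy]
  obtain ⟨x, hxD, hxmax⟩ := exists_maximal_finset hP D ⟨y, hyD⟩
  have hxA : x ∈ A := (Finset.mem_filter.mp hxD).1
  have hxy : x = y ∨ P x y := (Finset.mem_filter.mp hxD).2
  refine ⟨x, ⟨hxA, ?_⟩, hxy⟩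
  intro w hw hwx
  have hwA : w ∈ A := hw
  have hwy : w = y ∨ P w y := by
    rcases hxy with rfl | h
    · right; exact hwx
    · right; exact hP.2 _ _ _ hwx h
  exact hxmax w (Finset.mem_filter.mpr ⟨hwA, hwy⟩) hwx

/-- a choice function is with rational limited consideration (RLC)
iff it is a shortlisting (SL). -/
theorem stmt_1 [Fintype α] [DecidableEq α] [Nonempty α]
    (c : Finset α → α) (hc : ∀ A : Finset α, A.Nonempty → c A ∈ A) :
    (∃ (rhd : α → α → Prop) (Γ : Finset α → Set α),
        IsLinearRel rhd ∧ IsChoiceCorr Γ ∧ AxiomAlpha Γ ∧ AxiomGamma Γ ∧ AxiomDelta Γ ∧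
        ∀ A : Finset α, A.Nonempty → maxSet rhd (Γ A) = {c A}) ↔
    (∃ (P rhd : α → α → Prop), IsPartialRel P ∧ IsLinearRel rhd ∧
        ∀ A : Finset α, A.Nonempty → maxSet rhd (maxSet P ↑A) = {c A}) := by
  constructor
  · rintro ⟨rhd, Γ, hlin, hcc, hα, hγ, hδ, hmax⟩
    classical
    set R : α → α → Prop := fun x y => x ∈ Γ ({x, y} : Finset α) with hR
    -- basic facts about R
    have hRrefl : ∀ x, R x x := by
      intro x
      have h1 : x ∈ Γ {x} := by
        obtain ⟨⟨z, hz⟩, hsub⟩ := hcc {x} ⟨x, Finset.mem_singleton_self x⟩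
        have hz' : z = x := by simpa using hsub hz
        rwa [hz'] at hz
      show x ∈ Γ ({x, x} : Finset α)
      have hxx : ({x, x} : Finset α) = {x} := by simp
      rw [hxx]; exact h1
    have hRcomp : ∀ x y, R x y ∨ R y x := by
      intro x y
      obtain ⟨hne, hsub⟩ := hcc {x, y} ⟨x, by simp⟩
      obtain ⟨z, hz⟩ := hne
      have : z = x ∨ z = y := by simpa using hsub hz
      rcases this with rfl | rfl
      · exact Or.inl hz
      · right; show z ∈ Γ ({z, x} : Finset α); rwa [Finset.pair_comm]
    -- rationalization: Γ A = greatest elements of R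
    have hratF : ∀ (A : Finset α), A.Nonempty → ∀ x ∈ Γ A, x ∈ A ∧ ∀ y ∈ A, R x y := by
      intro A hA x hx
      have hxA : x ∈ A := (hcc A hA).2 hx
      refine ⟨hxA, fun y hy => ?_⟩
      exact hα {x, y} A ⟨x, by simp⟩ (Finset.insert_subset hxA (by simpa using hy)) x (by simp) hx
    have hratB : ∀ (A : Finset α), ∀ x ∈ A, (∀ y ∈ A, R x y) → x ∈ Γ A := by
      intro A
      induction A using Finset.strongInduction with
      | _ A ih =>
        intro x hx hall
        by_cases hsing : A = {x}
        · subst hsing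
          obtain ⟨⟨z, hz⟩, hsub⟩ := hcc {x} ⟨x, Finset.mem_singleton_self x⟩
          have hz' : z = x := by simpa using hsub hz
          rwa [hz'] at hz
        · have hex : ∃ a ∈ A, a ≠ x := by
            by_contra h
            push_neg at h
            apply hsing
            ext b
            simp only [Finset.mem_singleton]
            exact ⟨fun hb => h b hb, fun hb => hb ▸ hx⟩
          obtain ⟨a, ha, hax⟩ := hex
          have hxA' : x ∈ A.erase a := Finset.mem_erase.mpr ⟨fun h => hax h.symm, hx⟩
          have hss : A.erase a ⊂ A := Finset.erase_ssubset ha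
          have hx' : x ∈ Γ (A.erase a) :=
            ih (A.erase a) hss x hxA' (fun y hy => hall y (Finset.mem_of_mem_erase hy))
          have hpair : x ∈ Γ ({x, a} : Finset α) := hall a ha
          have hun : A.erase a ∪ ({x, a} : Finset α) = A := by
            ext b
            simp only [Finset.mem_union, Finset.mem_erase, Finset.mem_insert,
              Finset.mem_singleton]
            constructor
            · rintro (⟨_, hb⟩ | rfl | rfl) <;> first | exact hb | exact hx | exact ha
            · intro hb
              by_cases hba : b = a
              · exact Or.inr (Or.inr hba)
              · exact Or.inl ⟨hba, hb⟩
          have := hγ (A.erase a) {x, a} ⟨x, hxA'⟩ ⟨x, by simp⟩ x hxA' (by simp) hx' hpair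
          rwa [hun] at this
    -- the revealed strict preference
    set P : α → α → Prop := fun x y => R x y ∧ ¬ R y x with hPdef
    have hPasym : ∀ x y, P x y → ¬ P y x := fun x y h h' => h.2 h'.1
    have hPne : ∀ x y, P x y → x ≠ y := by
      rintro x y h rfl; exact h.2 h.1
    -- transitivity of P
    have hPtrans : ∀ x y z, P x y → P y z → P x z := by
      intro x y z hxy hyz
      by_contra hxz
      have hxney : x ≠ y := hPne _ _ hxy
      have hynez : y ≠ z := hPne _ _ hyz
      have hxnez : x ≠ z := by
        rintro rfl
        exact hxy.2 hyz.1
      have hT : ({x, y, z} : Finset α).Nonempty := ⟨x, by simp⟩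
      by_cases hRxz : R x z
      · -- then R z x too, and Γ {x,y,z} = {x}, contradicting δ
        have hRzx : R z x := by
          by_contra h
          exact hxz ⟨hRxz, h⟩
        have hxT : x ∈ Γ ({x, y, z} : Finset α) := by
          apply hratB
          · simp
          · intro u hu
            simp only [Finset.mem_insert, Finset.mem_singleton] at hu
            rcases hu with rfl | rfl | rfl
            · exact hRrefl u
            · exact hxy.1
            · exact hRxz
        have hTsub : Γ ({x, y, z} : Finset α) = {x} := by
          apply Set.eq_singleton_iff_unique_mem.mpr
          refine ⟨hxT, fun w hw => ?_⟩
          obtain ⟨hwT, hwall⟩ := hratF _ hT w hw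
          simp only [Finset.mem_insert, Finset.mem_singleton] at hwT
          rcases hwT with rfl | rfl | rfl
          · rfl
          · exact absurd (hwall x (by simp)) hxy.2
          · exact absurd (hwall y (by simp)) hyz.2
        have hxpair : x ∈ Γ ({x, z} : Finset α) := by
          apply hratB
          · simp
          · intro u hu
            simp only [Finset.mem_insert, Finset.mem_singleton] at hu
            rcases hu with rfl | rfl
            · exact hRrefl u
            · exact hRxz
        have hzpair : z ∈ Γ ({x, z} : Finset α) := by
          apply hratB
          · simp
          · intro u hu
            simp only [Finset.mem_insert, Finset.mem_singleton] at hu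
            rcases hu with rfl | rfl
            · exact hRzx
            · exact hRrefl u
        have hsub : ({x, z} : Finset α) ⊆ {x, y, z} := by
          intro b hb
          simp only [Finset.mem_insert, Finset.mem_singleton] at hb ⊢
          tauto
        have := hδ {x, z} {x, y, z} ⟨x, by simp⟩ hsub x z hxpair hzpair hxnez
        exact this.1 hTsub
      · -- Γ {x,y,z} would be empty
        obtain ⟨⟨w, hw⟩, _⟩ := hcc {x, y, z} hT
        obtain ⟨hwT, hwall⟩ := hratF _ hT w hw
        simp only [Finset.mem_insert, Finset.mem_singleton] at hwT
        rcases hwT with rfl | rfl | rfl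
        · exact hRxz (hwall z (by simp))
        · exact hxy.2 (hwall x (by simp))
        · exact hyz.2 (hwall y (by simp))
    -- maxSet P ↑A = Γ A
    have hkey : ∀ (A : Finset α), A.Nonempty → maxSet P ↑A = Γ A := by
      intro A hA
      ext x
      constructor
      · rintro ⟨hxA, hxm⟩
        have hxA' : x ∈ A := hxA
        apply hratB A x hxA'
        intro y hy
        have := hxm y hy
        by_cases hxy : x = y
        · exact hxy ▸ hRrefl x
        · rcases hRcomp x y with h | h
          · exact h
          · by_contra hxRy
            exact this ⟨h, hxRy⟩
      · intro hx
        obtain ⟨hxA, hall⟩ := hratF A hA x hx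
        refine ⟨hxA, fun w hw hPwx => ?_⟩
        exact hPwx.2 (hall w hw)
    exact ⟨P, rhd, ⟨hPasym, hPtrans⟩, hlin, fun A hA => by rw [hkey A hA]; exact hmax A hA⟩
  · rintro ⟨P, rhd, hP, hlin, hmax⟩
    refine ⟨rhd, fun A => maxSet P ↑A, hlin, ?_, ?_, ?_, ?_, hmax⟩
    · -- IsChoiceCorr
      intro A hA
      obtain ⟨x, hxA, hxm⟩ := exists_maximal_finset hP A hA
      exact ⟨⟨x, hxA, fun w hw => hxm w hw⟩, fun z hz => hz.1⟩
    · -- Alpha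
      intro A B hA hAB x hxA hxB
      exact ⟨hxA, fun w hw => hxB.2 w (hAB hw)⟩
    · -- Gamma
      intro A B hA hB x hxA hxB hΓA hΓB
      refine ⟨by simp [hxA], ?_⟩
      intro w hw
      rcases Finset.mem_union.mp hw with h | h
      · exact hΓA.2 w h
      · exact hΓB.2 w h
    · -- Delta
      intro A B hA hAB x y hx hy hxy
      constructor
      · intro hBx
        have hBx' : maxSet P ↑B = {x} := hBx
        obtain ⟨z, hzm, hzy⟩ := exists_max_above hP B (hAB (Finset.mem_coe.mp hy.1))
        rw [hBx'] at hzm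
        have hzx : z = x := hzm
        subst hzx
        rcases hzy with rfl | h
        · exact hxy rfl
        · exact hy.2 z hx.1 h
      · intro hBy
        have hBy' : maxSet P ↑B = {y} := hBy
        obtain ⟨z, hzm, hzx⟩ := exists_max_above hP B (hAB (Finset.mem_coe.mp hx.1))
        rw [hBy'] at hzm
        have hzy : z = y := hzm
        subst hzy
        rcases hzx with rfl | h
        · exact hxy rfl
        · exact hx.2 z hy.1 h
end

section
/- Let c be a choice function on a finite nonempty set X with rational limited consideration, and let (Γ,▷) be an explanation by consideration of c, i.e. ▷ is a linear order on X, Γ is a choice correspondence satisfying Axioms α, γ and δ, and c(A) = max(Γ(A),▷) for every menu A. If A is a menu and x ∈ A is such that A∖{x} is nonempty and x ≠ c(A) ≠ c(A∖{x}), then c(A∖{x}) ▷ c(A), c(A∖{x}) ∉ Γ(A), and Γ(A) strictly contains {c(A)}. -/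
variable {α : Type*}

/-- for an RLC choice function with explanation by consideration (Γ,▷), a
minimal switch (A∖{x},A) implies c(A∖{x}) ▷ c(A), c(A∖{x}) ∉ Γ(A), and {c(A)} ⊊ Γ(A). -/
theorem stmt_2 [Fintype α] [DecidableEq α] [Nonempty α]
    (c : Finset α → α) (hc : ∀ A : Finset α, A.Nonempty → c A ∈ A)
    (rhd : α → α → Prop) (Γ : Finset α → Set α)
    (hlin : IsLinearRel rhd) (hcorr : IsChoiceCorr Γ)
    (hα : AxiomAlpha Γ) (hγ : AxiomGamma Γ) (hδ : AxiomDelta Γ)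
    (hexp : ∀ A : Finset α, A.Nonempty → maxSet rhd (Γ A) = {c A})
    (A : Finset α) (hA : A.Nonempty) (x : α) (hx : x ∈ A)
    (hne : (A.erase x).Nonempty) (h1 : x ≠ c A) (h2 : c A ≠ c (A.erase x)) :
    rhd (c (A.erase x)) (c A) ∧ c (A.erase x) ∉ Γ A ∧ {c A} ⊂ Γ A := by
  set B := A.erase x with hB
  set a := c A
  set b := c B
  -- a ∈ maxSet of Γ A
  have hmaxA : a ∈ maxSet rhd (Γ A) := by rw [hexp A hA]; rfl
  have hmaxB : b ∈ maxSet rhd (Γ B) := by rw [hexp B hne]; rfl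
  obtain ⟨haΓA, haMax⟩ := hmaxA
  obtain ⟨hbΓB, hbMax⟩ := hmaxB
  -- a ∈ B
  have haB : a ∈ B := Finset.mem_erase.2 ⟨Ne.symm h1, hc A hA⟩
  -- a ∈ Γ B by axiom α
  have haΓB : a ∈ Γ B := hα B A hne (Finset.erase_subset x A) a haB haΓA
  -- rhd b a
  have hba : rhd b a := by
    rcases hlin.2.2 b a (Ne.symm h2) with h | h
    · exact h
    · exact absurd h (hbMax a haΓB)
  refine ⟨hba, ?_, ?_⟩
  · intro hbΓA
    exact haMax b hbΓA hba
  · rw [Set.ssubset_iff_subset_ne]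
    constructor
    · intro y hy; simp only [Set.mem_singleton_iff] at hy; subst hy; exact haΓA
    · intro heq
      have := hδ B A hne (Finset.erase_subset x A) a b haΓB hbΓB h2
      exact this.1 heq.symm
end

section
/- For a choice function c on a finite nonempty set X the following are equivalent: (i) c is a choice with salient limited attention; (ii) c has a general temptation representation; (iii) c admits a conspicuity based endogenous reference representation. -/
variable {α : Type*}

/-- m is the maximum of S with respect to r. -/
def IsMaxOf (r : α → α → Prop) (S : Set α) (m : α) : Prop :=
  m ∈ S ∧ ∀ w ∈ S, w ≠ m → r m w

/-- m is the minimum of S with respect to r. -/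
def IsMinOf (r : α → α → Prop) (S : Set α) (m : α) : Prop :=
  m ∈ S ∧ ∀ w ∈ S, w ≠ m → r w m

/-- Γ is a salient attention filter with respect to the linear order ▷. -/
def SalientFilter [DecidableEq α] (rhd : α → α → Prop) (Γ : Finset α → Set α) : Prop :=
  ∀ B : Finset α, B.Nonempty → ∀ x ∈ B, ¬ IsMinOf rhd ↑B x →
    ¬ IsMaxOf rhd (Γ B) x → Γ B \ {x} = Γ (B.erase x)

/-- c is a choice with salient limited attention. -/
def CSLA [DecidableEq α] (c : Finset α → α) : Prop :=
  ∃ (rhd : α → α → Prop) (Γ : Finset α → Set α),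
    IsLinearRel rhd ∧ IsChoiceCorr Γ ∧ SalientFilter rhd Γ ∧
    ∀ A : Finset α, A.Nonempty → maxSet rhd (Γ A) = {c A}

/-- c has a general temptation representation. -/
def GTR (c : Finset α → α) : Prop :=
  ∃ (u v : α → ℝ) (W : ℝ → ℝ → ℝ),
    (∀ a b, 0 ≤ W a b) ∧
    (∀ a a' b, a < a' → W a b < W a' b) ∧
    (∀ a b b', b < b' → W a b < W a b') ∧
    ∀ A : Finset α, ∀ hA : A.Nonempty, ∀ x ∈ A, x ≠ c A →
      W (u x) (v x - A.sup' hA v) < W (u (c A)) (v (c A) - A.sup' hA v)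

/-- c admits a conspicuity based endogenous reference representation. -/
def CER (c : Finset α → α) : Prop :=
  ∃ (U : α → α → ℝ) (gg : α → α → Prop),
    (∀ ρ : α, Function.Injective (U ρ)) ∧ IsLinearRel gg ∧
    ∀ A : Finset α, A.Nonempty → ∃ r : α, IsMaxOf gg ↑A r ∧
      ∀ x ∈ A, x ≠ c A → U r x < U r (c A)

/-! ### Auxiliary machinery -/

open Classical in
/-- number of elements strictly below `x` under `r`. -/
noncomputable def relRank [Fintype α] (r : α → α → Prop) (x : α) : ℕ :=
  (Finset.univ.filter fun y => r x y).card

section rank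
variable [Fintype α] {r : α → α → Prop}

lemma relRank_lt_of (hr : IsLinearRel r) {x y : α} (h : r x y) :
    relRank r y < relRank r x := by
  classical
  obtain ⟨hasym, htrans, hcompl⟩ := hr
  unfold relRank
  apply Finset.card_lt_card
  constructor
  · intro z hz
    simp only [Finset.mem_filter, Finset.mem_univ, true_and] at hz ⊢
    exact htrans _ _ _ h hz
  · intro hsub
    have hy : y ∈ Finset.univ.filter fun z => r x z := by
      simp only [Finset.mem_filter, Finset.mem_univ, true_and]; exact h
    have := hsub hy
    simp only [Finset.mem_filter, Finset.mem_univ, true_and] at this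
    exact hasym _ _ this this

lemma relRank_iff (hr : IsLinearRel r) {x y : α} :
    r x y ↔ relRank r y < relRank r x := by
  constructor
  · exact relRank_lt_of hr
  · intro h
    by_contra hnot
    rcases eq_or_ne x y with rfl | hne
    · exact lt_irrefl _ h
    · rcases hr.2.2 x y hne with h1 | h1
      · exact hnot h1
      · exact absurd h (not_lt.2 (le_of_lt (relRank_lt_of hr h1)))

lemma relRank_injOn (hr : IsLinearRel r) {x y : α} (h : relRank r x = relRank r y) : x = y := by
  by_contra hne
  rcases hr.2.2 x y hne with h1 | h1
  · exact (ne_of_lt (relRank_lt_of hr h1)) h.symm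
  · exact (ne_of_lt (relRank_lt_of hr h1)) h

lemma exists_isMinOf (hr : IsLinearRel r) (A : Finset α) (hA : A.Nonempty) :
    ∃ m ∈ A, IsMinOf r ↑A m := by
  obtain ⟨m, hm, hmin⟩ := A.exists_min_image (relRank r) hA
  refine ⟨m, hm, by exact_mod_cast hm, ?_⟩
  intro w hw hwne
  have hle : relRank r m ≤ relRank r w := hmin w (by exact_mod_cast hw)
  have : relRank r m ≠ relRank r w := fun h => hwne (relRank_injOn hr h.symm)
  exact (relRank_iff hr).2 (lt_of_le_of_ne hle this)

lemma exists_isMaxOf (hr : IsLinearRel r) (A : Finset α) (hA : A.Nonempty) :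
    ∃ m ∈ A, IsMaxOf r ↑A m := by
  obtain ⟨m, hm, hmax⟩ := A.exists_max_image (relRank r) hA
  refine ⟨m, hm, by exact_mod_cast hm, ?_⟩
  intro w hw hwne
  have hle : relRank r w ≤ relRank r m := hmax w (by exact_mod_cast hw)
  have : relRank r w ≠ relRank r m := fun h => hwne (relRank_injOn hr h)
  exact (relRank_iff hr).2 (lt_of_le_of_ne hle this)

lemma isMinOf_unique (hr : IsLinearRel r) {S : Set α} {m m' : α}
    (h : IsMinOf r S m) (h' : IsMinOf r S m') : m = m' := by
  by_contra hne
  exact hr.1 _ _ (h.2 m' h'.1 (Ne.symm hne)) (h'.2 m h.1 hne)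

lemma isMaxOf_unique (hr : IsLinearRel r) {S : Set α} {m m' : α}
    (h : IsMaxOf r S m) (h' : IsMaxOf r S m') : m = m' := by
  by_contra hne
  exact hr.1 _ _ (h.2 m' h'.1 (Ne.symm hne)) (h'.2 m h.1 hne)

end rank

/-- perturbation lemma: any real function can be refined to an injective one. -/
lemma exists_inj_mono [Fintype α] [Nonempty α] (F : α → ℝ) :
    ∃ G : α → ℝ, Function.Injective G ∧ ∀ x y, F x < F y → G x < G y := by
  classical
  set n := Fintype.card α with hn
  set ι : α → ℕ := fun x => ((Fintype.equivFin α) x : ℕ) with hι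
  have hιlt : ∀ x, ι x < n := fun x => ((Fintype.equivFin α) x).isLt
  have hιinj : Function.Injective ι := fun x y h =>
    (Fintype.equivFin α).injective (Fin.ext h)
  set cnt : α → ℕ := fun x => (Finset.univ.filter fun y => F y < F x).card with hcnt
  have hcnt_lt : ∀ {x y}, F x < F y → cnt x < cnt y := by
    intro x y hxy
    apply Finset.card_lt_card
    constructor
    · intro z hz
      simp only [Finset.mem_filter, Finset.mem_univ, true_and] at hz ⊢
      exact lt_trans hz hxy
    · intro hsub
      have hx : x ∈ Finset.univ.filter fun z => F z < F y := by
        simp only [Finset.mem_filter, Finset.mem_univ, true_and]; exact hxy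
      have := hsub hx
      simp only [Finset.mem_filter, Finset.mem_univ, true_and] at this
      exact lt_irrefl _ this
  refine ⟨fun x => ((n * cnt x + ι x : ℕ) : ℝ), ?_, ?_⟩
  · intro x y h
    have h' : n * cnt x + ι x = n * cnt y + ι y := by
      have := h
      simp only at this
      exact_mod_cast this
    rcases lt_trichotomy (F x) (F y) with hlt | heq | hgt
    · have h1 := hcnt_lt hlt
      have h2 := hιlt x
      nlinarith [hιlt x, hιlt y]
    · have hcc : cnt x = cnt y := by
        have hset : (Finset.univ.filter fun z => F z < F x)
            = (Finset.univ.filter fun z => F z < F y) := by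
          apply Finset.filter_congr
          intro z _
          rw [heq]
        simp only [hcnt]
        rw [hset]
      rw [hcc] at h'
      exact hιinj (Nat.add_left_cancel h')
    · have h1 := hcnt_lt hgt
      nlinarith [hιlt x, hιlt y]
  · intro x y hxy
    have h1 : cnt x < cnt y := hcnt_lt hxy
    have : n * cnt x + ι x < n * cnt y + ι y := by
      have := hιlt x
      calc n * cnt x + ι x < n * cnt x + n := by omega
        _ = n * (cnt x + 1) := by ring
        _ ≤ n * cnt y := Nat.mul_le_mul_left n (by omega)
        _ ≤ n * cnt y + ι y := Nat.le_add_right _ _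
    show ((n * cnt x + ι x : ℕ) : ℝ) < ((n * cnt y + ι y : ℕ) : ℝ)
    exact_mod_cast this

/-! ### CSLA → CER -/

section L1
variable [Fintype α] [DecidableEq α]
variable {c : Finset α → α} {rhd : α → α → Prop} {Γ : Finset α → Set α}

lemma choice_max (hlin : IsLinearRel rhd)
    (hmax : ∀ A : Finset α, A.Nonempty → maxSet rhd (Γ A) = {c A})
    {A : Finset α} (hA : A.Nonempty) :
    c A ∈ Γ A ∧ ∀ z ∈ Γ A, z ≠ c A → rhd (c A) z := by
  have hmem : c A ∈ maxSet rhd (Γ A) := by rw [hmax A hA]; rfl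
  refine ⟨hmem.1, fun z hz hzne => ?_⟩
  rcases hlin.2.2 (c A) z (Ne.symm hzne) with h | h
  · exact h
  · exact absurd h (hmem.2 z hz)

lemma contract_aux (hlin : IsLinearRel rhd) (hfil : SalientFilter rhd Γ)
    (hmax : ∀ A : Finset α, A.Nonempty → maxSet rhd (Γ A) = {c A}) :
    ∀ (n : ℕ) (B S : Finset α), B.card ≤ n → S ⊆ B → c B ∈ S →
      (∃ m ∈ S, IsMinOf rhd ↑B m) → c S = c B := by
  intro n
  induction n with
  | zero =>
    intro B S hcard hSB hcS _
    exact absurd (hSB hcS) (by simp [Finset.card_eq_zero.1 (Nat.le_zero.1 hcard)])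
  | succ n ih =>
    intro B S hcard hSB hcS hmin
    obtain ⟨m, hmS, hmMin⟩ := hmin
    by_cases hBS : B ⊆ S
    · rw [Finset.Subset.antisymm hSB hBS]
    · obtain ⟨x, hxB, hxS⟩ := Finset.not_subset.1 hBS
      have hBne : B.Nonempty := ⟨x, hxB⟩
      have hcBB : c B ∈ B := hSB hcS
      have hcBx : c B ≠ x := fun h => hxS (h ▸ hcS)
      have hxmin : ¬ IsMinOf rhd ↑B x := fun h =>
        hxS ((isMinOf_unique hlin h hmMin) ▸ hmS)
      have hxmax : ¬ IsMaxOf rhd (Γ B) x := by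
        intro hx
        have hmem : x ∈ maxSet rhd (Γ B) := by
          refine ⟨hx.1, fun w hw => ?_⟩
          by_cases hwx : w = x
          · subst hwx; exact fun hr => hlin.1 _ _ hr hr
          · exact fun hr => hlin.1 _ _ (hx.2 w hw hwx) hr
        rw [hmax B hBne] at hmem
        exact hxS (hmem ▸ hcS)
      have herase := hfil B hBne x hxB hxmin hxmax
      have hBene : (B.erase x).Nonempty :=
        ⟨c B, Finset.mem_erase.2 ⟨hcBx, hcBB⟩⟩
      have hchoice : c (B.erase x) = c B := by
        have h1 := hmax (B.erase x) hBene
        rw [← herase] at h1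
        have hcm := choice_max hlin hmax hBne
        have hcB_in : c B ∈ maxSet rhd (Γ B \ {x}) := by
          refine ⟨⟨hcm.1, hcBx⟩, fun w hw hr => ?_⟩
          by_cases hwc : w = c B
          · subst hwc; exact hlin.1 _ _ hr hr
          · exact hlin.1 _ _ (hcm.2 w hw.1 hwc) hr
        rw [h1] at hcB_in
        exact hcB_in.symm
      have hcard' : (B.erase x).card ≤ n := by
        have := Finset.card_erase_of_mem hxB
        omega
      have hSBe : S ⊆ B.erase x := fun s hs =>
        Finset.mem_erase.2 ⟨fun h => hxS (h ▸ hs), hSB hs⟩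
      have := ih (B.erase x) S hcard' hSBe (hchoice ▸ hcS)
        ⟨m, hmS, Finset.mem_coe.2 (hSBe hmS), fun w hw hwne =>
          hmMin.2 w (Finset.mem_coe.2 (Finset.erase_subset x B (Finset.mem_coe.1 hw))) hwne⟩
      rw [this, hchoice]

lemma contract (hlin : IsLinearRel rhd) (hfil : SalientFilter rhd Γ)
    (hmax : ∀ A : Finset α, A.Nonempty → maxSet rhd (Γ A) = {c A})
    {B S : Finset α} (hSB : S ⊆ B) (hcS : c B ∈ S)
    (hmin : ∃ m ∈ S, IsMinOf rhd ↑B m) : c S = c B :=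
  contract_aux hlin hfil hmax B.card B S le_rfl hSB hcS hmin

end L1

lemma csla_to_cer [Fintype α] [DecidableEq α] [Nonempty α]
    (c : Finset α → α) (hc : ∀ A : Finset α, A.Nonempty → c A ∈ A)
    (h : CSLA c) : CER c := by
  classical
  obtain ⟨rhd, Γ, hlin, hΓ, hfil, hmax⟩ := h
  set Q : α → α → α → Prop := fun ρ a b => a ≠ b ∧ (a = ρ ∨ rhd a ρ) ∧ (b = ρ ∨ rhd b ρ) ∧
      c (insert a (insert b {ρ})) = a with hQ
  have hQasym : ∀ ρ a b, Q ρ a b → ¬ Q ρ b a := by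
    intro ρ a b hab hba
    have hmenus : (insert a (insert b {ρ}) : Finset α) = insert b (insert a {ρ}) :=
      Finset.insert_comm a b {ρ}
    have h1 : c (insert a (insert b {ρ})) = a := hab.2.2.2
    have h2 : c (insert b (insert a {ρ})) = b := hba.2.2.2
    rw [hmenus] at h1
    exact hab.1 (h1.symm.trans h2)
  have hQtrans : ∀ ρ x y z, Q ρ x y → Q ρ y z → Q ρ x z := by
    intro ρ x y z hxy hyz
    have hxz : x ≠ z := by
      rintro rfl; exact hQasym ρ x y hxy hyz
    have hρD : ρ ∈ (insert x (insert y (insert z {ρ})) : Finset α) := by simp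
    have hρmin : IsMinOf rhd ↑(insert x (insert y (insert z {ρ})) : Finset α) ρ := by
      refine ⟨by exact_mod_cast hρD, fun w hw hwne => ?_⟩
      have hw' : w = x ∨ w = y ∨ w = z ∨ w = ρ := by simpa using hw
      rcases hw' with rfl | rfl | rfl | rfl
      · rcases hxy.2.1 with h | h
        · exact absurd h hwne
        · exact h
      · rcases hxy.2.2.1 with h | h
        · exact absurd h hwne
        · exact h
      · rcases hyz.2.2.1 with h | h
        · exact absurd h hwne
        · exact h
      · exact absurd rfl hwne
    have hDne : (insert x (insert y (insert z {ρ})) : Finset α).Nonempty := ⟨ρ, hρD⟩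
    have hcD := hc _ hDne
    have hS1D : (insert x (insert y {ρ}) : Finset α) ⊆ insert x (insert y (insert z {ρ})) := by
      intro s hs
      simp only [Finset.mem_insert, Finset.mem_singleton] at hs ⊢
      rcases hs with h | h | h
      · exact Or.inl h
      · exact Or.inr (Or.inl h)
      · exact Or.inr (Or.inr (Or.inr h))
    have hS2D : (insert y (insert z {ρ}) : Finset α) ⊆ insert x (insert y (insert z {ρ})) := by
      intro s hs
      simp only [Finset.mem_insert, Finset.mem_singleton] at hs ⊢
      rcases hs with h | h | h
      · exact Or.inr (Or.inl h)
      · exact Or.inr (Or.inr (Or.inl h))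
      · exact Or.inr (Or.inr (Or.inr h))
    have hS3D : (insert x (insert z {ρ}) : Finset α) ⊆ insert x (insert y (insert z {ρ})) := by
      intro s hs
      simp only [Finset.mem_insert, Finset.mem_singleton] at hs ⊢
      rcases hs with h | h | h
      · exact Or.inl h
      · exact Or.inr (Or.inr (Or.inl h))
      · exact Or.inr (Or.inr (Or.inr h))
    have hρmin1 : ∃ m ∈ (insert x (insert y {ρ}) : Finset α),
        IsMinOf rhd ↑(insert x (insert y (insert z {ρ})) : Finset α) m := ⟨ρ, by simp, hρmin⟩
    have hρmin2 : ∃ m ∈ (insert y (insert z {ρ}) : Finset α),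
        IsMinOf rhd ↑(insert x (insert y (insert z {ρ})) : Finset α) m := ⟨ρ, by simp, hρmin⟩
    have hρmin3 : ∃ m ∈ (insert x (insert z {ρ}) : Finset α),
        IsMinOf rhd ↑(insert x (insert y (insert z {ρ})) : Finset α) m := ⟨ρ, by simp, hρmin⟩
    have hcDx : c (insert x (insert y (insert z {ρ}))) = x := by
      by_contra hne
      have hcD' : c (insert x (insert y (insert z {ρ}))) = x ∨
          c (insert x (insert y (insert z {ρ}))) = y ∨
          c (insert x (insert y (insert z {ρ}))) = z ∨
          c (insert x (insert y (insert z {ρ}))) = ρ := by simpa using hcD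
      by_cases hz : c (insert x (insert y (insert z {ρ}))) = z
      · have := contract hlin hfil hmax hS2D (by rw [hz]; simp) hρmin2
        rw [hyz.2.2.2] at this
        exact hyz.1 (this.trans hz)
      · have hcDS1 : c (insert x (insert y (insert z {ρ}))) ∈
            (insert x (insert y {ρ}) : Finset α) := by
          rcases hcD' with h | h | h | h
          · exact absurd h hne
          · rw [h]; simp
          · exact absurd h hz
          · rw [h]; simp
        have := contract hlin hfil hmax hS1D hcDS1 hρmin1
        rw [hxy.2.2.2] at this
        exact hne this.symm
    have hfin := contract hlin hfil hmax hS3D (by rw [hcDx]; simp) hρmin3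
    rw [hcDx] at hfin
    exact ⟨hxz, hxy.2.1, hyz.2.2.1, hfin⟩
  -- counting utility
  set U0 : α → α → ℕ := fun ρ x => (Finset.univ.filter fun y => Q ρ x y).card with hU0
  have hU0lt : ∀ ρ a b, Q ρ a b → U0 ρ b < U0 ρ a := by
    intro ρ a b hab
    apply Finset.card_lt_card
    constructor
    · intro z hz
      simp only [Finset.mem_filter, Finset.mem_univ, true_and] at hz ⊢
      exact hQtrans ρ a b z hab hz
    · intro hsub
      have hb : b ∈ Finset.univ.filter fun y => Q ρ a y := by
        simp only [Finset.mem_filter, Finset.mem_univ, true_and]; exact hab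
      have := hsub hb
      simp only [Finset.mem_filter, Finset.mem_univ, true_and] at this
      exact this.1 rfl
  have hUex : ∀ ρ : α, ∃ G : α → ℝ, Function.Injective G ∧
      ∀ x y, ((U0 ρ x : ℝ)) < (U0 ρ y : ℝ) → G x < G y := fun ρ =>
    exists_inj_mono (fun x => (U0 ρ x : ℝ))
  refine ⟨fun ρ => (hUex ρ).choose, fun x y => rhd y x,
    fun ρ => (hUex ρ).choose_spec.1, ⟨fun x y h => hlin.1 y x h,
      fun x y z h1 h2 => hlin.2.1 z y x h2 h1,
      fun x y hne => (hlin.2.2 x y hne).symm.imp id id⟩, ?_⟩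
  intro A hA
  obtain ⟨m, hmA, hmMin⟩ := exists_isMinOf hlin A hA
  refine ⟨m, ⟨hmMin.1, fun w hw hwne => hmMin.2 w hw hwne⟩, ?_⟩
  intro x hxA hxne
  have hcA : c A ∈ A := hc A hA
  -- Q m (c A) x
  have hQcx : Q m (c A) x := by
    refine ⟨Ne.symm hxne, ?_, ?_, ?_⟩
    · by_cases h : c A = m
      · exact Or.inl h
      · exact Or.inr (hmMin.2 (c A) hcA h)
    · by_cases h : x = m
      · exact Or.inl h
      · exact Or.inr (hmMin.2 x hxA h)
    · have hsub : (insert (c A) (insert x {m}) : Finset α) ⊆ A := by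
        intro s hs
        simp at hs
        rcases hs with rfl | rfl | rfl
        · exact hcA
        · exact hxA
        · exact hmA
      exact contract hlin hfil hmax hsub (by simp) ⟨m, by simp, hmMin⟩
  have hlt := hU0lt m (c A) x hQcx
  exact (hUex m).choose_spec.2 x (c A) (by exact_mod_cast hlt)

/-! ### CER → CSLA -/

lemma cer_to_csla [Fintype α] [DecidableEq α] [Nonempty α]
    (c : Finset α → α) (hc : ∀ A : Finset α, A.Nonempty → c A ∈ A)
    (h : CER c) : CSLA c := by
  classical
  obtain ⟨U, gg, hUinj, hgg, hrep⟩ := h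
  set g : α → ℕ := relRank gg with hgdef
  have ginj : ∀ {a b : α}, g a = g b → a = b := fun {a b} h => relRank_injOn hgg h
  have hglt : ∀ {a b : α}, gg a b → g b < g a := fun {a b} h => relRank_lt_of hgg h
  set rhd : α → α → Prop := fun x y => g x < g y with hrhddef
  have hlin : IsLinearRel rhd := by
    refine ⟨fun x y => lt_asymm, fun x y z => lt_trans, fun x y hne => ?_⟩
    rcases hgg.2.2 x y hne with h | h
    · exact Or.inr (hglt h)
    · exact Or.inl (hglt h)
  set Γ : Finset α → Set α := fun A => {y | y ∈ A ∧ (y = c A ∨ ∀ z ∈ A, g z ≤ g y)}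
    with hΓdef
  have hΓmem : ∀ (A : Finset α) (y : α),
      y ∈ Γ A ↔ y ∈ A ∧ (y = c A ∨ ∀ z ∈ A, g z ≤ g y) := fun A y => Iff.rfl
  have hmaxle : ∀ (A : Finset α) (r : α), IsMaxOf gg ↑A r → ∀ z ∈ A, g z ≤ g r := by
    intro A r hr z hz
    by_cases hzr : z = r
    · rw [hzr]
    · exact le_of_lt (hglt (hr.2 z hz hzr))
  have hmaxuniq : ∀ (A : Finset α) (y : α), y ∈ A → (∀ z ∈ A, g z ≤ g y) →
      ∀ (r : α), r ∈ A → (∀ z ∈ A, g z ≤ g r) → y = r := by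
    intro A y hy hymax r hr hrmax
    exact ginj (le_antisymm (hrmax y hy) (hymax r hr))
  -- the choice is unaffected by removing a non-reference non-chosen item
  have hkey : ∀ (B : Finset α) (x : α), B.Nonempty → x ∈ B →
      (∀ r, IsMaxOf gg ↑B r → x ≠ r) → x ≠ c B → c (B.erase x) = c B := by
    intro B x hBne hxB hxr hxc
    obtain ⟨r, hrmax, hrrep⟩ := hrep B hBne
    have hcB : c B ∈ B := hc B hBne
    have hcBe : c B ∈ B.erase x := Finset.mem_erase.2 ⟨Ne.symm hxc, hcB⟩
    have hBene : (B.erase x).Nonempty := ⟨c B, hcBe⟩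
    obtain ⟨r', hrmax', hrrep'⟩ := hrep (B.erase x) hBene
    have hrx : x ≠ r := hxr r hrmax
    have hre : r ∈ B.erase x := Finset.mem_erase.2 ⟨Ne.symm hrx, hrmax.1⟩
    have hrmaxe : IsMaxOf gg ↑(B.erase x) r :=
      ⟨by exact_mod_cast hre, fun w hw hwne =>
        hrmax.2 w (Finset.mem_coe.2 (Finset.erase_subset x B (Finset.mem_coe.1 hw))) hwne⟩
    have hr'r : r' = r := isMaxOf_unique hgg hrmax' hrmaxe
    subst hr'r
    by_contra hne
    have h1 : U r' (c (B.erase x)) < U r' (c B) :=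
      hrrep (c (B.erase x)) (Finset.erase_subset x B (hc _ hBene)) hne
    have h2 : U r' (c B) < U r' (c (B.erase x)) :=
      hrrep' (c B) hcBe (fun hcontra => hne hcontra.symm)
    exact lt_asymm h1 h2
  refine ⟨rhd, Γ, hlin, ?_, ?_, ?_⟩
  · -- choice correspondence
    intro A hA
    exact ⟨⟨c A, (hΓmem A (c A)).2 ⟨hc A hA, Or.inl rfl⟩⟩,
      fun y hy => ((hΓmem A y).1 hy).1⟩
  · -- salient filter
    intro B hBne x hxB hxmin hxmax
    obtain ⟨r, hrmax, hrrep⟩ := hrep B hBne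
    have hgle : ∀ z ∈ B, g z ≤ g r := hmaxle B r hrmax
    have hrminB : IsMinOf rhd ↑B r := by
      refine ⟨hrmax.1, fun w hw hwne => ?_⟩
      have := hgle w hw
      exact lt_of_le_of_ne this (fun hh => hwne (ginj hh))
    have hxr : x ≠ r := fun hh => hxmin (hh ▸ hrminB)
    have hcBmaxΓ : IsMaxOf rhd (Γ B) (c B) := by
      refine ⟨(hΓmem B (c B)).2 ⟨hc B hBne, Or.inl rfl⟩, fun w hw hwne => ?_⟩
      obtain ⟨hwB, hwcase⟩ := (hΓmem B w).1 hw
      rcases hwcase with h | h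
      · exact absurd h hwne
      · have hwr : w = r := hmaxuniq B w hwB h r hrmax.1 hgle
        subst hwr
        have : g (c B) ≤ g w := hgle (c B) (hc B hBne)
        exact lt_of_le_of_ne this (fun hh => (Ne.symm hwne) (ginj hh))
    have hxc : x ≠ c B := fun hh => hxmax (hh ▸ hcBmaxΓ)
    have hxrall : ∀ r', IsMaxOf gg ↑B r' → x ≠ r' := by
      intro r' hr' hh
      exact hxr (hh ▸ isMaxOf_unique hgg hr' hrmax)
    have hcera : c (B.erase x) = c B := hkey B x hBne hxB hxrall hxc
    ext y
    constructor
    · rintro ⟨hyΓ, hyx⟩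
      have hyx' : y ≠ x := hyx
      obtain ⟨hyB, hycase⟩ := (hΓmem B y).1 hyΓ
      refine (hΓmem (B.erase x) y).2 ⟨Finset.mem_erase.2 ⟨hyx', hyB⟩, ?_⟩
      rcases hycase with hcase | hcase
      · rw [hcera]; exact Or.inl hcase
      · exact Or.inr (fun z hz => hcase z (Finset.erase_subset x B hz))
    · intro hyΓ
      obtain ⟨hyBe, hycase⟩ := (hΓmem (B.erase x) y).1 hyΓ
      obtain ⟨hyx, hyB⟩ := Finset.mem_erase.1 hyBe
      refine ⟨(hΓmem B y).2 ⟨hyB, ?_⟩, hyx⟩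
      rcases hycase with hcase | hcase
      · rw [hcera] at hcase; exact Or.inl hcase
      · refine Or.inr (fun z hz => ?_)
        by_cases hzx : z = x
        · subst hzx
          have hrB : r ∈ B.erase z := Finset.mem_erase.2 ⟨Ne.symm hxr, hrmax.1⟩
          calc g z ≤ g r := hgle z hz
            _ ≤ g y := hcase r hrB
        · exact hcase z (Finset.mem_erase.2 ⟨hzx, hz⟩)
  · -- maxSet = {c A}
    intro A hA
    obtain ⟨r, hrmax, hrrep⟩ := hrep A hA
    have hgle : ∀ z ∈ A, g z ≤ g r := hmaxle A r hrmax
    have hcA : c A ∈ A := hc A hA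
    ext z
    simp only [maxSet, Set.mem_setOf_eq, Set.mem_singleton_iff]
    constructor
    · rintro ⟨hzΓ, hzmax⟩
      obtain ⟨hzA, hzcase⟩ := (hΓmem A z).1 hzΓ
      rcases hzcase with h | h
      · exact h
      · have hzr : z = r := hmaxuniq A z hzA h r hrmax.1 hgle
        subst hzr
        by_contra hne
        have hcAΓ : c A ∈ Γ A := (hΓmem A (c A)).2 ⟨hcA, Or.inl rfl⟩
        have : rhd (c A) z :=
          lt_of_le_of_ne (hgle (c A) hcA) (fun hh => hne (ginj hh).symm)
        exact hzmax (c A) hcAΓ this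
    · rintro rfl
      refine ⟨(hΓmem A (c A)).2 ⟨hcA, Or.inl rfl⟩, fun w hw hrw => ?_⟩
      obtain ⟨hwA, hwcase⟩ := (hΓmem A w).1 hw
      rcases hwcase with h | h
      · subst h; exact lt_irrefl _ hrw
      · have hwr : w = r := hmaxuniq A w hwA h r hrmax.1 hgle
        subst hwr
        exact absurd hrw (not_lt.2 (hgle (c A) hcA))

/-! ### GTR → CER -/

lemma gtr_to_cer [Fintype α] [DecidableEq α] [Nonempty α]
    (c : Finset α → α) (h : GTR c) : CER c := by
  classical
  obtain ⟨u, v, W, hW0, hW1, hW2, hrep⟩ := h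
  obtain ⟨vt, hvtinj, hvtmono⟩ := exists_inj_mono v
  have hUex : ∀ ρ : α, ∃ G : α → ℝ, Function.Injective G ∧
      ∀ x y, W (u x) (v x - v ρ) < W (u y) (v y - v ρ) → G x < G y := fun ρ =>
    exists_inj_mono (fun x => W (u x) (v x - v ρ))
  refine ⟨fun ρ => (hUex ρ).choose, fun x y => vt y < vt x,
    fun ρ => (hUex ρ).choose_spec.1,
    ⟨fun x y => lt_asymm, fun x y z h1 h2 => lt_trans h2 h1, fun x y hne => ?_⟩, ?_⟩
  · rcases lt_trichotomy (vt x) (vt y) with h | h | h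
    · exact Or.inr h
    · exact absurd (hvtinj h) hne
    · exact Or.inl h
  · intro A hA
    obtain ⟨r, hrA, hrmax⟩ := A.exists_max_image vt hA
    have hrMax : IsMaxOf (fun x y => vt y < vt x) ↑A r := by
      refine ⟨hrA, fun w hw hwne => ?_⟩
      exact lt_of_le_of_ne (hrmax w hw) (fun hh => hwne (hvtinj hh))
    have hsup : A.sup' hA v = v r := by
      apply le_antisymm
      · refine Finset.sup'_le hA v (fun b hb => ?_)
        by_contra hlt
        push_neg at hlt
        exact absurd (hrmax b hb) (not_le.2 (hvtmono r b hlt))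
      · exact Finset.le_sup' v hrA
    refine ⟨r, hrMax, fun x hx hxne => ?_⟩
    have := hrep A hA x hx hxne
    rw [hsup] at this
    exact (hUex r).choose_spec.2 x (c A) this

/-! ### CER → GTR -/

lemma cer_to_gtr [Fintype α] [DecidableEq α] [Nonempty α]
    (c : Finset α → α) (hc : ∀ A : Finset α, A.Nonempty → c A ∈ A)
    (h : CER c) : GTR c := by
  classical
  obtain ⟨U, gg, hUinj, hgg, hrep⟩ := h
  set n := Fintype.card α with hn
  set g : α → ℕ := relRank gg with hgdef
  have ginj : ∀ {a b : α}, g a = g b → a = b := fun {a b} h => relRank_injOn hgg h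
  have hglt : ∀ {a b : α}, gg a b → g b < g a := fun {a b} h => relRank_lt_of hgg h
  have hgbound : ∀ x, g x < n := by
    intro x
    apply Finset.card_lt_card
    rw [Finset.ssubset_univ_iff]
    intro heq
    have : x ∈ Finset.univ.filter fun y => gg x y := by rw [heq]; exact Finset.mem_univ x
    simp only [Finset.mem_filter, Finset.mem_univ, true_and] at this
    exact hgg.1 x x this this
  set rank : α → α → ℕ := fun ρ x =>
    (Finset.univ.filter fun y => g y ≤ g ρ ∧ U ρ y < U ρ x).card with hrankdef
  have hrankmono : ∀ ρ x y, g x ≤ g ρ → U ρ x < U ρ y → rank ρ x < rank ρ y := by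
    intro ρ x y hxρ hxy
    apply Finset.card_lt_card
    constructor
    · intro z hz
      simp only [Finset.mem_filter, Finset.mem_univ, true_and] at hz ⊢
      exact ⟨hz.1, lt_trans hz.2 hxy⟩
    · intro hsub
      have hx : x ∈ Finset.univ.filter fun z => g z ≤ g ρ ∧ U ρ z < U ρ y := by
        simp only [Finset.mem_filter, Finset.mem_univ, true_and]
        exact ⟨hxρ, hxy⟩
      have := hsub hx
      simp only [Finset.mem_filter, Finset.mem_univ, true_and] at this
      exact lt_irrefl _ this.2
  have hrankbound : ∀ ρ x, rank ρ x ≤ n := by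
    intro ρ x
    calc rank ρ x ≤ Finset.univ.card := Finset.card_filter_le _ _
      _ = n := rfl
  set val : α × α → ℕ := fun p => (n+1) * (n - g p.2) + rank p.2 p.1 with hvaldef
  have hvalmono : ∀ p q : α × α, g p.1 ≤ g p.2 → g q.1 ≤ g q.2 → p ≠ q →
      g q.1 ≤ g p.1 → g p.1 + g q.2 ≤ g q.1 + g p.2 → val p < val q := by
    intro p q hpI hqI hpq h1 h2
    have hρle : g q.2 ≤ g p.2 := by omega
    have hρlt : g q.2 < g p.2 := by
      rcases lt_or_eq_of_le hρle with h | h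
      · exact h
      · exfalso
        have hρeq : q.2 = p.2 := ginj h
        have hxeq : g p.1 = g q.1 := by omega
        exact hpq (Prod.ext (ginj hxeq) hρeq.symm)
    have hb2 := hgbound p.2
    have hstep : (n - g p.2) + 1 ≤ n - g q.2 := by omega
    calc val p = (n+1) * (n - g p.2) + rank p.2 p.1 := rfl
      _ ≤ (n+1) * (n - g p.2) + n := by
          exact Nat.add_le_add_left (hrankbound _ _) _
      _ < (n+1) * (n - g p.2) + (n+1) := by omega
      _ = (n+1) * ((n - g p.2) + 1) := by ring
      _ ≤ (n+1) * (n - g q.2) := Nat.mul_le_mul_left _ hstep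
      _ ≤ (n+1) * (n - g q.2) + rank q.2 q.1 := Nat.le_add_right _ _
      _ = val q := rfl
  have hvalinj : ∀ p q : α × α, g p.1 ≤ g p.2 → g q.1 ≤ g q.2 → val p = val q → p = q := by
    intro p q hpI hqI hval
    have hr1 := hrankbound p.2 p.1
    have hr2 := hrankbound q.2 q.1
    have hb1 := hgbound p.2
    have hb2 := hgbound q.2
    have key : ∀ a b r1 r2 : ℕ, r1 ≤ n → r2 ≤ n → (n+1)*a + r1 = (n+1)*b + r2 →
        a = b ∧ r1 = r2 := by
      have keyhalf : ∀ a b r1 r2 : ℕ, r1 ≤ n → r2 ≤ n → (n+1)*a + r1 = (n+1)*b + r2 →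
          a < b → False := by
        intro a b r1 r2 h1 h2 heq hab
        have h3 : (n+1)*b + r2 ≤ (n+1)*a + n := heq ▸ (Nat.add_le_add_left h1 _)
        have h4 : (n+1)*a + n < (n+1)*(a+1) := by
          rw [Nat.mul_succ]
          omega
        have h5 : (n+1)*(a+1) ≤ (n+1)*b := Nat.mul_le_mul_left _ hab
        have h6 : (n+1)*b ≤ (n+1)*b + r2 := Nat.le_add_right _ _
        omega
      intro a b r1 r2 h1 h2 heq
      rcases lt_trichotomy a b with hab | hab | hab
      · exact absurd (keyhalf a b r1 r2 h1 h2 heq hab) not_false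
      · subst hab
        exact ⟨rfl, Nat.add_left_cancel heq⟩
      · exact absurd (keyhalf b a r2 r1 h2 h1 heq.symm hab) not_false
    have hcases : (n - g p.2) = (n - g q.2) ∧ rank p.2 p.1 = rank q.2 q.1 :=
      key _ _ _ _ hr1 hr2 hval
    have hρeq : p.2 = q.2 := ginj (by omega)
    obtain ⟨hc1, hc2⟩ := hcases
    rw [hρeq] at hc2
    have hxeq : p.1 = q.1 := by
      by_contra hne
      rcases lt_trichotomy (U q.2 p.1) (U q.2 q.1) with hlt | heq | hgt
      · have := hrankmono q.2 p.1 q.1 (hρeq ▸ hpI) hlt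
        omega
      · exact hne (hUinj q.2 heq)
      · have := hrankmono q.2 q.1 p.1 hqI hgt
        omega
    exact Prod.ext hxeq hρeq
  set u : α → ℝ := fun x => -(g x : ℝ) with hudef
  set v : α → ℝ := fun x => (g x : ℝ) with hvdef
  set Φ : ℝ → ℝ → ℝ := fun a b =>
      ∑ p : α × α, if g p.1 ≤ g p.2 ∧ (-(g p.1 : ℝ)) ≤ a ∧ ((g p.1 : ℝ) - (g p.2 : ℝ)) ≤ b
        then (2:ℝ)^(val p) else 0 with hΦdef
  have harct : ∀ t : ℝ, -(1/4 : ℝ) < Real.arctan t / 8 ∧ Real.arctan t / 8 < 1/4 := by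
    intro t
    have h1 := Real.arctan_lt_pi_div_two t
    have h2 := Real.neg_pi_div_two_lt_arctan t
    have hπ1 := Real.pi_le_four
    have hπ2 := Real.pi_pos
    constructor <;> nlinarith
  have hΦnonneg : ∀ a b, 0 ≤ Φ a b := by
    intro a b
    rw [hΦdef]
    apply Finset.sum_nonneg
    intro p _
    by_cases hp : g p.1 ≤ g p.2 ∧ (-(g p.1 : ℝ)) ≤ a ∧ ((g p.1 : ℝ) - (g p.2 : ℝ)) ≤ b
    · rw [if_pos hp]; positivity
    · rw [if_neg hp]
  have hΦmono : ∀ a a' b b', a ≤ a' → b ≤ b' → Φ a b ≤ Φ a' b' := by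
    intro a a' b b' ha hb
    rw [hΦdef]
    apply Finset.sum_le_sum
    intro p _
    by_cases hp : g p.1 ≤ g p.2 ∧ (-(g p.1 : ℝ)) ≤ a ∧ ((g p.1 : ℝ) - (g p.2 : ℝ)) ≤ b
    · have hp' : g p.1 ≤ g p.2 ∧ (-(g p.1 : ℝ)) ≤ a' ∧ ((g p.1 : ℝ) - (g p.2 : ℝ)) ≤ b' :=
        ⟨hp.1, le_trans hp.2.1 ha, le_trans hp.2.2 hb⟩
      rw [if_pos hp, if_pos hp']
    · rw [if_neg hp]
      by_cases hp' : g p.1 ≤ g p.2 ∧ (-(g p.1 : ℝ)) ≤ a' ∧ ((g p.1 : ℝ) - (g p.2 : ℝ)) ≤ b'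
      · rw [if_pos hp']; positivity
      · rw [if_neg hp']
  refine ⟨u, v, fun a b => Φ a b + Real.arctan a / 8 + Real.arctan b / 8 + 1,
    ?_, ?_, ?_, ?_⟩
  · intro a b
    have h1 := (harct a).1
    have h2 := (harct b).1
    have h3 := hΦnonneg a b
    linarith
  · intro a a' b ha
    have h1 := hΦmono a a' b b ha.le le_rfl
    have h2 := Real.arctan_strictMono ha
    linarith
  · intro a b b' hb
    have h1 := hΦmono a a b b' le_rfl hb.le
    have h2 := Real.arctan_strictMono hb
    linarith
  · intro A hA x hx hxne
    obtain ⟨r, hrmax, hrrep⟩ := hrep A hA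
    have hrA : r ∈ A := by exact_mod_cast hrmax.1
    have hgler : ∀ z ∈ A, g z ≤ g r := by
      intro z hz
      by_cases hzr : z = r
      · rw [hzr]
      · exact le_of_lt (hglt (hrmax.2 z hz hzr))
    have hsup : A.sup' hA v = (g r : ℝ) := by
      apply le_antisymm
      · refine Finset.sup'_le hA v (fun z hz => ?_)
        simp only [hvdef]
        exact_mod_cast hgler z hz
      · exact Finset.le_sup' v hrA
    have hcA : c A ∈ A := hc A hA
    have hUlt : U r x < U r (c A) := hrrep x hx hxne
    have hgxr : g x ≤ g r := hgler x hx
    have hgcr : g (c A) ≤ g r := hgler _ hcA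
    have hvallt : val (x, r) < val ((c A), r) :=
      Nat.add_lt_add_left (hrankmono r x (c A) hgxr hUlt) _
    rw [hsup]
    -- lower bound at the chosen point
    have hq : g ((c A), r).1 ≤ g ((c A), r).2 ∧ (-(g ((c A), r).1 : ℝ)) ≤ u (c A) ∧
        ((g ((c A), r).1 : ℝ) - (g ((c A), r).2 : ℝ)) ≤ v (c A) - (g r : ℝ) :=
      ⟨hgcr, by simp [hudef], by simp [hvdef]⟩
    have hΦq : (2:ℝ)^(val ((c A), r)) ≤ Φ (u (c A)) (v (c A) - (g r : ℝ)) := by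
      rw [hΦdef]
      have hterm : ∀ p ∈ (Finset.univ : Finset (α × α)), (0:ℝ) ≤
          if g p.1 ≤ g p.2 ∧ (-(g p.1 : ℝ)) ≤ u (c A) ∧
            ((g p.1 : ℝ) - (g p.2 : ℝ)) ≤ v (c A) - (g r : ℝ)
          then (2:ℝ)^(val p) else 0 := by
        intro p _
        by_cases hp : g p.1 ≤ g p.2 ∧ (-(g p.1 : ℝ)) ≤ u (c A) ∧
            ((g p.1 : ℝ) - (g p.2 : ℝ)) ≤ v (c A) - (g r : ℝ)
        · rw [if_pos hp]; positivity
        · rw [if_neg hp]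
      have h1 := Finset.single_le_sum hterm (Finset.mem_univ ((c A), r))
      rw [if_pos hq] at h1
      exact h1
    -- upper bound at the other point
    have hΦp : Φ (u x) (v x - (g r : ℝ)) ≤ 2^(val (x, r) + 1) - 1 := by
      simp only [hΦdef]
      rw [← Finset.sum_filter]
      set S : Finset (α × α) := Finset.univ.filter fun p =>
        g p.1 ≤ g p.2 ∧ (-(g p.1 : ℝ)) ≤ u x ∧
          ((g p.1 : ℝ) - (g p.2 : ℝ)) ≤ v x - (g r : ℝ) with hSdef
    -- membership facts
      have hSfact : ∀ p ∈ S, g p.1 ≤ g p.2 ∧ g x ≤ g p.1 ∧ g p.1 + g r ≤ g x + g p.2 := by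
        intro p hp
        rw [hSdef, Finset.mem_filter] at hp
        obtain ⟨-, hI, ha, hb⟩ := hp
        simp only [hudef] at ha
        simp only [hvdef] at hb
        refine ⟨hI, ?_, ?_⟩
        · have : (g x : ℝ) ≤ (g p.1 : ℝ) := by linarith
          exact_mod_cast this
        · have : (g p.1 : ℝ) + (g r : ℝ) ≤ (g x : ℝ) + (g p.2 : ℝ) := by linarith
          exact_mod_cast this
      have hvle : ∀ p ∈ S, val p < val (x, r) + 1 := by
        intro p hp
        obtain ⟨hI, h1, h2⟩ := hSfact p hp
        by_cases hpe : p = (x, r)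
        · rw [hpe]; omega
        · have := hvalmono p (x, r) hI hgxr hpe h1 h2
          omega
      have hinj : ∀ p ∈ S, ∀ q ∈ S, val p = val q → p = q := by
        intro p hp q hq hval
        exact hvalinj p q (hSfact p hp).1 (hSfact q hq).1 hval
      calc (∑ p ∈ S, (2:ℝ)^(val p)) = ∑ k ∈ S.image val, (2:ℝ)^k :=
            (Finset.sum_image hinj).symm
        _ ≤ ∑ k ∈ Finset.range (val (x, r) + 1), (2:ℝ)^k := by
            apply Finset.sum_le_sum_of_subset_of_nonneg
            · intro k hk
              rw [Finset.mem_image] at hk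
              obtain ⟨p, hp, rfl⟩ := hk
              exact Finset.mem_range.2 (hvle p hp)
            · intro k _ _
              positivity
        _ = 2^(val (x, r) + 1) - 1 := by
            rw [geom_sum_eq (by norm_num : (2:ℝ) ≠ 1)]
            norm_num
    have hpow : (2:ℝ)^(val (x, r) + 1) ≤ 2^(val ((c A), r)) := by
      apply pow_le_pow_right₀ (by norm_num : (1:ℝ) ≤ 2)
      omega
    have ha1 := harct (u x)
    have ha2 := harct (v x - (g r : ℝ))
    have ha3 := harct (u (c A))
    have ha4 := harct (v (c A) - (g r : ℝ))
    linarith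

/-- salient limited attention, general temptation representation, and
conspicuity based endogenous reference representation are equivalent. -/
theorem stmt_3 [Fintype α] [DecidableEq α] [Nonempty α]
    (c : Finset α → α) (hc : ∀ A : Finset α, A.Nonempty → c A ∈ A) :
    (CSLA c ↔ GTR c) ∧ (GTR c ↔ CER c) := by
  constructor
  · constructor
    · intro h
      exact cer_to_gtr c hc (csla_to_cer c hc h)
    · intro h
      exact cer_to_csla c hc (gtr_to_cer c h)
  · exact ⟨gtr_to_cer c, cer_to_gtr c hc⟩
end

section
/- Let c be a choice function on a finite nonempty set X. The relation ⊨ is asymmetric (i.e. for no distinct x,y ∈ X do both x ⊨ y and y ⊨ x hold) if and only if c satisfies the Axiom of Revealed Temptation: for every menu B there is an element x ∈ B such that no pair (B′,B″) of menus with x ∈ B′ ⊂ B″ ⊆ B is a switch. -/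
variable {α : Type*}

/-- (A∖{x},A) is a minimal switch for c. -/
def SwitchAt [DecidableEq α] (c : Finset α → α) (A : Finset α) (x : α) : Prop :=
  x ∈ A ∧ (A.erase x).Nonempty ∧ x ≠ c A ∧ c A ≠ c (A.erase x)

/-- (C,D) is a switch for c. -/
def SwitchPair (c : Finset α → α) (C D : Finset α) : Prop :=
  C.Nonempty ∧ C ⊆ D ∧ c C ≠ c D ∧ c D ∈ C

/-- x ⊨ y : there is a menu A containing x and y such that (A∖{x},A) is a minimal switch. -/
def Vdash [DecidableEq α] (c : Finset α → α) (x y : α) : Prop :=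
  x ≠ y ∧ ∃ A : Finset α, x ∈ A ∧ y ∈ A ∧ SwitchAt c A x

lemma vdash_of_switch [DecidableEq α] {c : Finset α → α} {A : Finset α} {w t : α}
    (h : SwitchAt c A w) (ht : t ∈ A) (hne : w ≠ t) : Vdash c w t :=
  ⟨hne, A, h.1, ht, h⟩

/-- Chain lemma: any switch contains a minimal switch. -/
lemma chain_lemma [DecidableEq α] (c : Finset α → α) :
    ∀ D C : Finset α, C ⊆ D → C.Nonempty → c D ∈ C → c C ≠ c D →
      ∃ F w, C ⊆ F.erase w ∧ F ⊆ D ∧ SwitchAt c F w := by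
  intro D
  induction D using Finset.strongInduction with
  | _ D ih =>
    intro C hCD hCne hcD hne
    have hDC : ¬ D ⊆ C := by
      intro h
      exact hne (by rw [Finset.Subset.antisymm hCD h])
    obtain ⟨u, huD, huC⟩ := Finset.not_subset.mp hDC
    have hCe : C ⊆ D.erase u := Finset.subset_erase.mpr ⟨hCD, huC⟩
    by_cases hcase : c (D.erase u) = c D
    · obtain ⟨F, w, h1, h2, h3⟩ := ih (D.erase u) (Finset.erase_ssubset huD) C hCe hCne
        (by rwa [hcase]) (by rwa [hcase])
      exact ⟨F, w, h1, h2.trans (Finset.erase_subset u D), h3⟩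
    · obtain ⟨a, ha⟩ := hCne
      exact ⟨D, u, hCe, Finset.Subset.refl D, huD, ⟨a, hCe ha⟩,
        fun h => huC (by rw [h]; exact hcD), fun h => hcase h.symm⟩

lemma vdash_trans [DecidableEq α] (c : Finset α → α)
    (hc : ∀ A : Finset α, A.Nonempty → c A ∈ A)
    (As : ∀ x y : α, Vdash c x y → ¬ Vdash c y x)
    {x y z : α} (hxy : Vdash c x y) (hyz : Vdash c y z) (hxz : x ≠ z) :
    Vdash c x z := by
  obtain ⟨hxyne, A, hxA, hyA, hA⟩ := hxy
  obtain ⟨hyzne, A', hyA', hzA', hA'⟩ := hyz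
  have hxy' : Vdash c x y := ⟨hxyne, A, hxA, hyA, hA⟩
  have hyz' : Vdash c y z := ⟨hyzne, A', hyA', hzA', hA'⟩
  have cA_mem : c A ∈ A := hc A ⟨x, hxA⟩
  have cA'_mem : c A' ∈ A' := hc A' ⟨y, hyA'⟩
  have hxA' : x ∉ A' := fun h => As x y hxy' (vdash_of_switch hA' h (Ne.symm hxyne))
  by_cases hzA : z ∈ A
  · exact vdash_of_switch hA hzA hxz
  set G : Finset α := insert z A with hGdef
  have hGe : G.erase z = A := Finset.erase_insert hzA
  have hxG : x ∈ G := Finset.mem_insert_of_mem hxA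
  have hyG : y ∈ G := Finset.mem_insert_of_mem hyA
  have hzG : z ∈ G := Finset.mem_insert_self z A
  -- Step 1 : analysis of G = insert z A
  by_cases h1 : c G = c A
  · by_cases h2 : c (G.erase x) = c G
    · -- minimal switch at z on G.erase x tempts y : contradiction
      exfalso
      have hGx : G.erase x = insert z (A.erase x) := Finset.erase_insert_of_ne (Ne.symm hxz)
      have he : (G.erase x).erase z = A.erase x := by
        rw [hGx]
        exact Finset.erase_insert (fun h => hzA (Finset.mem_of_mem_erase h))
      have hzm : z ∈ G.erase x := Finset.mem_erase.mpr ⟨Ne.symm hxz, hzG⟩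
      have hsw : SwitchAt c (G.erase x) z := by
        refine ⟨hzm, ?_, ?_, ?_⟩
        · rw [he]; exact hA.2.1
        · rw [h2, h1]; exact fun h => hzA (h ▸ cA_mem)
        · rw [he, h2, h1]; exact hA.2.2.2
      have hym : y ∈ G.erase x := Finset.mem_erase.mpr ⟨Ne.symm hxyne, hyG⟩
      exact As z y (vdash_of_switch hsw hym (Ne.symm hyzne)) hyz'
    · -- minimal switch at x on G : x ⊨ z
      have hsw : SwitchAt c G x := by
        refine ⟨hxG, ⟨z, Finset.mem_erase.mpr ⟨Ne.symm hxz, hzG⟩⟩, ?_, fun h => h2 h.symm⟩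
        rw [h1]; exact hA.2.2.1
      exact vdash_of_switch hsw hzG hxz
  · by_cases h2 : z = c G
    · -- bad case for G : c G = z ; analyze H = insert x A'
      set H : Finset α := insert x A' with hHdef
      have hHe : H.erase x = A' := Finset.erase_insert hxA'
      have hxH : x ∈ H := Finset.mem_insert_self x A'
      have hyH : y ∈ H := Finset.mem_insert_of_mem hyA'
      have hzH : z ∈ H := Finset.mem_insert_of_mem hzA'
      by_cases k1 : c H = c A'
      · by_cases k2 : c (H.erase y) = c H
        · -- minimal switch at x on H.erase y : x ⊨ z
          have hHy : H.erase y = insert x (A'.erase y) := Finset.erase_insert_of_ne hxyne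
          have he : (H.erase y).erase x = A'.erase y := by
            rw [hHy]
            exact Finset.erase_insert (fun h => hxA' (Finset.mem_of_mem_erase h))
          have hxm : x ∈ H.erase y := Finset.mem_erase.mpr ⟨hxyne, hxH⟩
          have hsw : SwitchAt c (H.erase y) x := by
            refine ⟨hxm, ?_, ?_, ?_⟩
            · rw [he]; exact hA'.2.1
            · rw [k2, k1]; exact fun h => hxA' (h ▸ cA'_mem)
            · rw [he, k2, k1]; exact hA'.2.2.2
          have hzm : z ∈ H.erase y := Finset.mem_erase.mpr ⟨Ne.symm hyzne, hzH⟩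
          exact vdash_of_switch hsw hzm hxz
        · -- minimal switch at y on H tempts x : contradiction
          exfalso
          have hsw : SwitchAt c H y := by
            refine ⟨hyH, ⟨x, Finset.mem_erase.mpr ⟨hxyne, hxH⟩⟩, ?_, fun h => k2 h.symm⟩
            rw [k1]; exact hA'.2.2.1
          exact As x y hxy' (vdash_of_switch hsw hxH (Ne.symm hxyne))
      · by_cases k2 : x = c H
        · -- final step : M = A ∪ A'
          exfalso
          set M : Finset α := A ∪ A' with hMdef
          have hGM : G ⊆ M := by
            intro a ha
            rcases Finset.mem_insert.mp ha with h | h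
            · exact Finset.mem_union_right A (h ▸ hzA')
            · exact Finset.mem_union_left A' h
          have hHM : H ⊆ M := by
            intro a ha
            rcases Finset.mem_insert.mp ha with h | h
            · exact Finset.mem_union_left A' (h ▸ hxA)
            · exact Finset.mem_union_right A h
          have hcM : c M ∈ M := hc M ⟨x, Finset.mem_union_left A' hxA⟩
          -- a helper : chain on (H, M) gives a contradiction whenever c M ∈ H, c M ≠ x
          have hchainH : c M ∈ H → c M ≠ x → False := by
            intro hmem hnex
            obtain ⟨F, w, hHF, hFM, hF⟩ := chain_lemma c M H hHM ⟨x, hxH⟩ hmem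
              (by rw [← k2]; exact fun h => hnex h.symm)
            have hwH : w ∉ H := fun h => Finset.notMem_erase w F (hHF h)
            have hwA : w ∈ A := by
              rcases Finset.mem_union.mp (hFM hF.1) with h | h
              · exact h
              · exact absurd (Finset.mem_insert_of_mem h) hwH
            have hwx : w ≠ x := fun h => hwH (h ▸ hxH)
            exact As x w (vdash_of_switch hA hwA (Ne.symm hwx))
              (vdash_of_switch hF (Finset.mem_of_mem_erase (hHF hxH)) hwx)
          by_cases m1 : c M = z
          · exact hchainH (m1 ▸ hzH) (fun h => hxz (h.symm.trans m1))
          · by_cases m2 : c M ∈ G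
            · -- chain on (G, M)
              obtain ⟨F, w, hGF, hFM, hF⟩ := chain_lemma c M G hGM ⟨x, hxG⟩ m2
                (by rw [← h2]; exact fun h => m1 h.symm)
              have hwG : w ∉ G := fun h => Finset.notMem_erase w F (hGF h)
              have hwA' : w ∈ A' := by
                rcases Finset.mem_union.mp (hFM hF.1) with h | h
                · exact absurd (Finset.mem_insert_of_mem h) hwG
                · exact h
              have hwy : w ≠ y := fun h => hwG (h ▸ hyG)
              exact As y w (vdash_of_switch hA' hwA' (Ne.symm hwy))
                (vdash_of_switch hF (Finset.mem_of_mem_erase (hGF hyG)) hwy)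
            · have hmem : c M ∈ H := by
                rcases Finset.mem_union.mp hcM with h | h
                · exact absurd (Finset.mem_insert_of_mem h) m2
                · exact Finset.mem_insert_of_mem h
              exact hchainH hmem (fun h => m2 (by rw [h]; exact hxG))
        · -- minimal switch at x on H : x ⊨ z
          have hsw : SwitchAt c H x :=
            ⟨hxH, ⟨y, Finset.mem_erase.mpr ⟨Ne.symm hxyne, hyH⟩⟩, k2,
              by rw [hHe]; exact fun h => k1 h⟩
          exact vdash_of_switch hsw hzH hxz
    · -- minimal switch at z on G tempts y : contradiction
      exfalso
      have hsw : SwitchAt c G z :=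
        ⟨hzG, ⟨x, Finset.mem_erase.mpr ⟨hxz, hxG⟩⟩, h2, by rw [hGe]; exact h1⟩
      exact As y z hyz' (vdash_of_switch hsw hyG (Ne.symm hyzne))

/-- ⊨ is asymmetric iff c satisfies the Axiom of Revealed Temptation. -/
theorem stmt_4 [Fintype α] [DecidableEq α] [Nonempty α]
    (c : Finset α → α) (hc : ∀ A : Finset α, A.Nonempty → c A ∈ A) :
    (∀ x y : α, Vdash c x y → ¬ Vdash c y x) ↔
    (∀ B : Finset α, B.Nonempty → ∃ x ∈ B, ∀ B' B'' : Finset α,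
      x ∈ B' → B' ⊂ B'' → B'' ⊆ B → ¬ SwitchPair c B' B'') := by
  constructor
  · -- asymmetry ⇒ ART
    intro As B hB
    by_contra h
    push_neg at h
    -- every element of B is tempted within B
    have hall : ∀ x ∈ B, ∃ w ∈ B, Vdash c w x := by
      intro x hx
      obtain ⟨B', B'', hxB', hss, hsub, hsp⟩ := h x hx
      obtain ⟨hne, hsb, hcne, hmem⟩ := hsp
      obtain ⟨F, w, hCF, hFD, hF⟩ := chain_lemma c B'' B' hsb hne hmem hcne
      refine ⟨w, hsub (hFD hF.1), ?_⟩
      have hxF : x ∈ F.erase w := hCF hxB'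
      exact vdash_of_switch hF (Finset.mem_of_mem_erase hxF)
        (Ne.symm (Finset.mem_erase.mp hxF).1)
    have hchoice : ∀ x : {a // a ∈ B}, ∃ w : {a // a ∈ B}, Vdash c w.1 x.1 := by
      rintro ⟨x, hx⟩
      obtain ⟨w, hw, hv⟩ := hall x hx
      exact ⟨⟨w, hw⟩, hv⟩
    choose g hg using hchoice
    obtain ⟨a0, ha0⟩ := hB
    set f : ℕ → {a // a ∈ B} := fun n => g^[n] ⟨a0, ha0⟩ with hfdef
    have hstep : ∀ n, Vdash c (f (n + 1)).1 (f n).1 := by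
      intro n
      have : f (n + 1) = g (f n) := Function.iterate_succ_apply' g n _
      rw [this]
      exact hg (f n)
    have hlt : ∀ j i, i < j → Vdash c (f j).1 (f i).1 := by
      intro j
      induction j with
      | zero => omega
      | succ j ih =>
        intro i hij
        rcases Nat.lt_succ_iff_lt_or_eq.mp hij with h' | h'
        · have h1 := ih i h'
          have h2 := hstep j
          by_cases he : (f (j + 1)).1 = (f i).1
          · exact absurd (he ▸ h2) (As _ _ h1)
          · exact vdash_trans c hc As h2 h1 he
        · subst h'; exact hstep i
    obtain ⟨i, j, hne, heq⟩ := Finite.exists_ne_map_eq_of_infinite f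
    rcases hne.lt_or_gt with h' | h'
    · exact (hlt j i h').1 (congrArg Subtype.val heq.symm)
    · exact (hlt i j h').1 (congrArg Subtype.val heq)
  · -- ART ⇒ asymmetry
    intro hART x y hxy hyx
    obtain ⟨hxyne, A, hxA, hyA, hA⟩ := hxy
    obtain ⟨hyxne, A', hyA', hxA', hA'⟩ := hyx
    obtain ⟨x0, hx0, hno⟩ := hART (A ∪ A') ⟨x, Finset.mem_union_left A' hxA⟩
    have hswA : SwitchPair c (A.erase x) A :=
      ⟨hA.2.1, Finset.erase_subset x A, fun h => hA.2.2.2 h.symm,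
        Finset.mem_erase.mpr ⟨Ne.symm hA.2.2.1, hc A ⟨x, hxA⟩⟩⟩
    have hswA' : SwitchPair c (A'.erase y) A' :=
      ⟨hA'.2.1, Finset.erase_subset y A', fun h => hA'.2.2.2 h.symm,
        Finset.mem_erase.mpr ⟨Ne.symm hA'.2.2.1, hc A' ⟨y, hyA'⟩⟩⟩
    have hAss : A.erase x ⊂ A := Finset.erase_ssubset hxA
    have hA'ss : A'.erase y ⊂ A' := Finset.erase_ssubset hyA'
    have hx0A : x0 ∈ A → x0 = x := by
      intro hmem
      by_contra hne
      exact hno (A.erase x) A (Finset.mem_erase.mpr ⟨hne, hmem⟩) hAss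
        (Finset.subset_union_left) hswA
    have hx0A' : x0 ∈ A' → x0 = y := by
      intro hmem
      by_contra hne
      exact hno (A'.erase y) A' (Finset.mem_erase.mpr ⟨hne, hmem⟩) hA'ss
        (Finset.subset_union_right) hswA'
    rcases Finset.mem_union.mp hx0 with hm | hm
    · have hx0x := hx0A hm
      exact hno (A'.erase y) A'
        (Finset.mem_erase.mpr ⟨by rw [hx0x]; exact hxyne, by rw [hx0x]; exact hxA'⟩)
        hA'ss Finset.subset_union_right hswA'
    · have hx0y := hx0A' hm
      exact hno (A.erase x) A
        (Finset.mem_erase.mpr ⟨by rw [hx0y]; exact hyxne, by rw [hx0y]; exact hyA⟩)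
        hAss Finset.subset_union_left hswA
end

section
/- Let c be a choice function on a finite nonempty set X that is a choice with salient limited attention. If there are a menu A and distinct x,y ∈ A such that x ≠ c(A) ≠ c(A∖{x}), then there exist a linear order ▷ on X and a salient attention filter Γ with respect to ▷ such that c(A′) = max(Γ(A′),▷) for every menu A′, and moreover y ▷ x, x ∈ Γ(A), and x = min(Γ(A),▷). -/
variable {α : Type*}

lemma linrel_min_unique {r : α → α → Prop} (hr : IsLinearRel r) {S : Set α} {m m' : α}
    (h : IsMinOf r S m) (h' : IsMinOf r S m') : m = m' := by
  by_contra hne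
  exact hr.1 _ _ (h.2 m' h'.1 (Ne.symm hne)) (h'.2 m h.1 hne)

lemma linrel_exists_min {r : α → α → Prop} (hr : IsLinearRel r) (B : Finset α) :
    B.Nonempty → ∃ m, IsMinOf r ↑B m := by
  classical
  induction B using Finset.induction_on with
  | empty => intro h; simp at h
  | @insert a s ha ih =>
    intro _
    rcases s.eq_empty_or_nonempty with hs | hs
    · subst hs
      refine ⟨a, by simp, ?_⟩
      intro w hw hwa
      simp at hw
      exact absurd hw hwa
    · obtain ⟨m, hm⟩ := ih hs
      have hms : m ∈ s := by exact_mod_cast hm.1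
      have ham : a ≠ m := fun h => ha (h ▸ hms)
      rcases hr.2.2 a m ham with h | h
      · refine ⟨m, by simp [hms], ?_⟩
        intro w hw hwm
        simp only [Finset.coe_insert, Set.mem_insert_iff] at hw
        rcases hw with rfl | hw
        · exact h
        · exact hm.2 w (by exact_mod_cast hw) hwm
      · refine ⟨a, by simp, ?_⟩
        intro w hw hwa
        simp only [Finset.coe_insert, Set.mem_insert_iff] at hw
        rcases hw with rfl | hw
        · exact absurd rfl hwa
        · by_cases hwm : w = m
          · exact hwm ▸ h
          · exact hr.2.1 w m a (hm.2 w (by exact_mod_cast hw) hwm) h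

/-- if c is a choice with salient limited attention and removing x from a menu A
containing a distinct item y causes a minimal switch, then there is an explanation by
consideration (Γ,▷) of c with y ▷ x, x ∈ Γ(A), and x = min(Γ(A),▷). -/
theorem stmt_5 [Fintype α] [DecidableEq α] [Nonempty α]
    (c : Finset α → α) (hc : ∀ A : Finset α, A.Nonempty → c A ∈ A)
    (hCSLA : CSLA c)
    (A : Finset α) (hA : A.Nonempty) (x y : α) (hx : x ∈ A) (hy : y ∈ A) (hxy : x ≠ y)
    (h1 : x ≠ c A) (h2 : c A ≠ c (A.erase x)) :
    ∃ (rhd : α → α → Prop) (Γ : Finset α → Set α),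
      IsLinearRel rhd ∧ IsChoiceCorr Γ ∧ SalientFilter rhd Γ ∧
      (∀ A' : Finset α, A'.Nonempty → maxSet rhd (Γ A') = {c A'}) ∧
      rhd y x ∧ x ∈ Γ A ∧ IsMinOf rhd (Γ A) x := by
  classical
  obtain ⟨r, Γ, hlin, hcc, hsf, hmax⟩ := hCSLA
  have asym := hlin.1
  -- basic facts about c B
  have hcB : ∀ B : Finset α, B.Nonempty → c B ∈ Γ B ∧ ∀ w ∈ Γ B, ¬ r w (c B) := by
    intro B hB
    have h : c B ∈ maxSet r (Γ B) := by rw [hmax B hB]; rfl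
    exact ⟨h.1, h.2⟩
  have hmaxeq : ∀ B : Finset α, B.Nonempty → ∀ z, IsMaxOf r (Γ B) z → z = c B := by
    intro B hB z hz
    have hz' : z ∈ maxSet r (Γ B) := by
      refine ⟨hz.1, fun w hw hrw => ?_⟩
      by_cases hwz : w = z
      · subst hwz; exact asym _ _ hrw hrw
      · exact asym _ _ (hz.2 w hw hwz) hrw
    rw [hmax B hB] at hz'
    exact hz'
  -- x is the r-minimum of A
  have hxmin : IsMinOf r ↑A x := by
    by_contra hmin
    have hxnm : ¬ IsMaxOf r (Γ A) x := fun h => h1 (hmaxeq A hA x h)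
    have heq := hsf A hA x hx hmin hxnm
    have hcAe : c A ∈ A.erase x := Finset.mem_erase.mpr ⟨Ne.symm h1, hc A hA⟩
    have hAe : (A.erase x).Nonempty := ⟨c A, hcAe⟩
    have hmem : c A ∈ maxSet r (Γ (A.erase x)) := by
      rw [← heq]
      obtain ⟨hm1, hm2⟩ := hcB A hA
      exact ⟨⟨hm1, Ne.symm h1⟩, fun w hw => hm2 w hw.1⟩
    rw [hmax (A.erase x) hAe] at hmem
    exact h2 hmem
  -- the modified correspondence: always include the minimum of the menu
  obtain ⟨mf, mf_spec⟩ : ∃ mf : ∀ B : Finset α, B.Nonempty → α,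
      ∀ (B : Finset α) (hB : B.Nonempty), IsMinOf r ↑B (mf B hB) :=
    ⟨fun B hB => Classical.choose (linrel_exists_min hlin B hB),
     fun B hB => Classical.choose_spec (linrel_exists_min hlin B hB)⟩
  set Γ' : Finset α → Set α := fun B =>
    if h : B.Nonempty then Γ B ∪ {mf B h} else ∅ with hΓ'def
  have hΓ' : ∀ (B : Finset α) (hB : B.Nonempty), Γ' B = Γ B ∪ {mf B hB} := by
    intro B hB; simp only [hΓ'def, dif_pos hB]
  have hcc' : IsChoiceCorr Γ' := by
    intro B hB
    rw [hΓ' B hB]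
    refine ⟨⟨mf B hB, Or.inr rfl⟩, ?_⟩
    rintro z (hz | hz)
    · exact (hcc B hB).2 hz
    · rw [Set.mem_singleton_iff] at hz
      exact hz ▸ (mf_spec B hB).1
  have hmax' : ∀ B : Finset α, B.Nonempty → maxSet r (Γ' B) = {c B} := by
    intro B hB
    rw [hΓ' B hB]
    have hmmin := mf_spec B hB
    ext z
    simp only [Set.mem_singleton_iff]
    constructor
    · rintro ⟨hz1, hz2⟩
      have hzG : z ∈ Γ B := by
        rcases hz1 with hz1 | hz1
        · exact hz1
        · rw [Set.mem_singleton_iff] at hz1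
          subst hz1
          by_contra hmem
          obtain ⟨w, hw⟩ := (hcc B hB).1
          have hwB : w ∈ (↑B : Set α) := (hcc B hB).2 hw
          have hwm : w ≠ mf B hB := fun h => hmem (h ▸ hw)
          exact hz2 w (Or.inl hw) (hmmin.2 w hwB hwm)
      have hz' : z ∈ maxSet r (Γ B) := ⟨hzG, fun w hw => hz2 w (Or.inl hw)⟩
      rw [hmax B hB] at hz'
      exact hz'
    · rintro rfl
      obtain ⟨hm1, hm2⟩ := hcB B hB
      refine ⟨Or.inl hm1, ?_⟩
      rintro w (hw | hw) hrw
      · exact hm2 w hw hrw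
      · rw [Set.mem_singleton_iff] at hw
        subst hw
        by_cases hmc : mf B hB = c B
        · rw [hmc] at hrw; exact asym _ _ hrw hrw
        · have hcBB : c B ∈ (↑B : Set α) := by exact_mod_cast hc B hB
          exact asym _ _ (hmmin.2 (c B) hcBB (Ne.symm hmc)) hrw
  have hsf' : SalientFilter r Γ' := by
    intro B hB z hzB hzmin hzmax
    have hmmin := mf_spec B hB
    set m := mf B hB with hmdef
    have hzm : z ≠ m := fun h => hzmin (by rw [h]; exact hmmin)
    have hmB : m ∈ B := by exact_mod_cast hmmin.1
    have hBe : (B.erase z).Nonempty := ⟨m, Finset.mem_erase.mpr ⟨Ne.symm hzm, hmB⟩⟩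
    have hmmin' : IsMinOf r ↑(B.erase z) m := by
      refine ⟨by exact_mod_cast Finset.mem_erase.mpr ⟨Ne.symm hzm, hmB⟩, ?_⟩
      intro w hw hwm
      have hwB : w ∈ (↑B : Set α) := by
        have : w ∈ B.erase z := by exact_mod_cast hw
        exact_mod_cast Finset.mem_of_mem_erase this
      exact hmmin.2 w hwB hwm
    have hmf' : mf (B.erase z) hBe = m :=
      linrel_min_unique hlin (mf_spec (B.erase z) hBe) hmmin'
    have hznm : ¬ IsMaxOf r (Γ B) z := by
      intro h
      apply hzmax
      rw [hΓ' B hB]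
      refine ⟨Or.inl h.1, ?_⟩
      rintro w (hw | hw) hwz
      · exact h.2 w hw hwz
      · rw [Set.mem_singleton_iff] at hw
        subst hw
        exact hmmin.2 z (by exact_mod_cast hzB) hzm
    have heq := hsf B hB z hzB hzmin hznm
    rw [hΓ' B hB, hΓ' (B.erase z) hBe, hmf', ← heq]
    ext w
    simp only [Set.mem_diff, Set.mem_union, Set.mem_singleton_iff]
    constructor
    · rintro ⟨hw | hw, hwz⟩
      · exact Or.inl ⟨hw, hwz⟩
      · exact Or.inr hw
    · rintro (⟨hw, hwz⟩ | rfl)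
      · exact ⟨Or.inl hw, hwz⟩
      · exact ⟨Or.inr rfl, Ne.symm hzm⟩
  have hmfA : mf A hA = x := linrel_min_unique hlin (mf_spec A hA) hxmin
  have hxΓ' : x ∈ Γ' A := by
    rw [hΓ' A hA, hmfA]
    exact Or.inr rfl
  refine ⟨r, Γ', hlin, hcc', hsf', hmax', ?_, hxΓ', ?_⟩
  · exact hxmin.2 y (by exact_mod_cast hy) (Ne.symm hxy)
  · refine ⟨hxΓ', ?_⟩
    intro w hw hwx
    exact hxmin.2 w ((hcc' A hA).2 hw) hwx
end

section
/- A choice function c on a finite nonempty set X is a choice with selective salient limited attention if and only if c satisfies Axiom α (for all menus A ⊆ B and x ∈ A, c(B) = x implies c(A) = x). -/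
variable {α : Type*}

/-- Γ is a selective salient attention filter with respect to the linear order ▷. -/
def SelectiveFilter [DecidableEq α] (rhd : α → α → Prop) (Γ : Finset α → Set α) : Prop :=
  ∀ B : Finset α, B.Nonempty → ∀ x ∈ B, ¬ IsMaxOf rhd (Γ B) x →
    Γ B \ {x} = Γ (B.erase x)

/-- c is a choice with selective salient limited attention iff it
satisfies Axiom α. -/
theorem stmt_6 [Fintype α] [DecidableEq α] [Nonempty α]
    (c : Finset α → α) (hc : ∀ A : Finset α, A.Nonempty → c A ∈ A) :
    (∃ (rhd : α → α → Prop) (Γ : Finset α → Set α),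
        IsLinearRel rhd ∧ IsChoiceCorr Γ ∧ SelectiveFilter rhd Γ ∧
        ∀ A : Finset α, A.Nonempty → maxSet rhd (Γ A) = {c A}) ↔
    (∀ A B : Finset α, A.Nonempty → A ⊆ B → c B ∈ A → c A = c B) := by
  constructor
  · rintro ⟨rhd, Γ, ⟨hasym, htrans, hcomp⟩, hcorr, hfilt, hmax⟩
    have key : ∀ B : Finset α, ∀ x ∈ B, x ≠ c B → c (B.erase x) = c B := by
      intro B x hxB hxc
      have hB : B.Nonempty := ⟨x, hxB⟩
      have hcBmax : c B ∈ maxSet rhd (Γ B) := by rw [hmax B hB]; rfl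
      have hcBΓ : c B ∈ Γ B := hcBmax.1
      have hcBun : ∀ w ∈ Γ B, ¬ rhd w (c B) := hcBmax.2
      have hnmax : ¬ IsMaxOf rhd (Γ B) x := by
        rintro ⟨hxΓ, hxbeats⟩
        apply hxc
        have hxm : x ∈ maxSet rhd (Γ B) := by
          refine ⟨hxΓ, fun w hw hrw => ?_⟩
          by_cases hwx : w = x
          · subst hwx; exact hasym w w hrw hrw
          · exact hasym x w (hxbeats w hw hwx) hrw
        rw [hmax B hB] at hxm; exact hxm
      have hΓe : Γ B \ {x} = Γ (B.erase x) := hfilt B hB x hxB hnmax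
      have herne : (B.erase x).Nonempty :=
        ⟨c B, Finset.mem_erase.mpr ⟨Ne.symm hxc, hc B hB⟩⟩
      have hmem : c B ∈ maxSet rhd (Γ (B.erase x)) := by
        rw [← hΓe]
        refine ⟨⟨hcBΓ, fun h => hxc (Set.mem_singleton_iff.mp h).symm⟩, ?_⟩
        intro w hw; exact hcBun w hw.1
      rw [hmax (B.erase x) herne] at hmem
      exact hmem.symm
    intro A B hA hAB hcBA
    have main : ∀ n (B : Finset α), (B \ A).card = n → A ⊆ B → c B ∈ A → c A = c B := by
      intro n
      induction n with
      | zero =>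
        intro B h hAB _
        have hBA : B ⊆ A := by
          intro y hy; by_contra hyA
          have hmem : y ∈ B \ A := Finset.mem_sdiff.mpr ⟨hy, hyA⟩
          rw [Finset.card_eq_zero] at h
          rw [h] at hmem; simp at hmem
        rw [Finset.Subset.antisymm hAB hBA]
      | succ n ih =>
        intro B h hAB hcBA
        have hne : (B \ A).Nonempty := by rw [← Finset.card_pos, h]; omega
        obtain ⟨x, hx⟩ := hne
        obtain ⟨hxB, hxA⟩ := Finset.mem_sdiff.mp hx
        have hxc : x ≠ c B := fun he => hxA (he ▸ hcBA)
        have hce := key B x hxB hxc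
        have hsub : A ⊆ B.erase x := fun y hy =>
          Finset.mem_erase.mpr ⟨fun he => hxA (he ▸ hy), hAB hy⟩
        have hcard : ((B.erase x) \ A).card = n := by
          have heq : B.erase x \ A = (B \ A).erase x := by
            ext y
            simp only [Finset.mem_erase, Finset.mem_sdiff]
            tauto
          rw [heq, Finset.card_erase_of_mem hx, h]; omega
        have hres := ih (B.erase x) hcard hsub (by rw [hce]; exact hcBA)
        rw [hres, hce]
    exact main _ B rfl hAB hcBA
  · intro hα
    refine ⟨fun x y => x ≠ y ∧ c {x, y} = x, fun A => ↑A, ⟨?_, ?_, ?_⟩, ?_, ?_, ?_⟩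
    · rintro x y ⟨hne, hxy⟩ ⟨-, hyx⟩
      rw [Finset.pair_comm y x, hxy] at hyx
      exact hne hyx
    · rintro x y z ⟨hxy, hcxy⟩ ⟨hyz, hcyz⟩
      have hxz : x ≠ z := by
        rintro rfl
        rw [Finset.pair_comm y x, hcxy] at hcyz
        exact hxy hcyz
      refine ⟨hxz, ?_⟩
      have hTne : ({x, y, z} : Finset α).Nonempty := ⟨x, by simp⟩
      have hcT := hc _ hTne
      simp only [Finset.mem_insert, Finset.mem_singleton] at hcT
      rcases hcT with h | h | h
      · have := hα {x, z} {x, y, z} ⟨x, by simp⟩ (by intro w hw; simp at hw ⊢; tauto)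
          (by rw [h]; simp)
        rw [this, h]
      · have := hα {x, y} {x, y, z} ⟨x, by simp⟩ (by intro w hw; simp at hw ⊢; tauto)
          (by rw [h]; simp)
        rw [hcxy] at this
        exact absurd (this.trans h) hxy
      · have := hα {y, z} {x, y, z} ⟨y, by simp⟩ (by intro w hw; simp at hw ⊢; tauto)
          (by rw [h]; simp)
        rw [hcyz] at this
        exact absurd (this.trans h) hyz
    · intro x y hne
      have h2 := hc {x, y} ⟨x, by simp⟩
      simp only [Finset.mem_insert, Finset.mem_singleton] at h2
      rcases h2 with h | h
      · exact Or.inl ⟨hne, h⟩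
      · refine Or.inr ⟨hne.symm, ?_⟩
        rw [Finset.pair_comm y x]; exact h
    · intro A hA
      exact ⟨by exact_mod_cast hA, subset_rfl⟩
    · intro B hB x hxB _
      simp [Finset.coe_erase]
    · intro A hA
      ext z
      simp only [maxSet, Set.mem_setOf_eq, Finset.mem_coe, Set.mem_singleton_iff]
      constructor
      · rintro ⟨hzA, hun⟩
        by_contra hzc
        exact hun (c A) (hc A hA)
          ⟨fun he => hzc he.symm,
           hα {c A, z} A ⟨c A, by simp⟩
             (by intro w hw; simp at hw; rcases hw with rfl | rfl; exacts [hc A hA, hzA])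
             (by simp)⟩
      · rintro rfl
        refine ⟨hc A hA, fun w hw ⟨hwne, hcw⟩ => ?_⟩
        have := hα {w, c A} A ⟨w, by simp⟩
          (by intro u hu; simp at hu; rcases hu with rfl | rfl; exacts [hw, hc A hA])
          (by simp)
        exact hwne (hcw ▸ this)
end

section
/- Let X be a finite set with at least two elements and let c be a choice function on X that is a choice with selective salient limited attention. Then there exist a linear order ▷ on X and a choice correspondence Γ such that c(A) = max(Γ(A),▷) for every menu A, for every menu B and every x ∈ B with x ≠ max(Γ(B),▷) one has Γ(B)∖{x} = Γ(B∖{x}), and Γ(A) is a proper subset of A for some menu A. -/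
variable {α : Type*}

/-- if X has at least two elements and c is a choice with selective salient
limited attention, then c admits an explanation by consideration whose filter is a proper
subset of some menu. -/
theorem stmt_7 [Fintype α] [DecidableEq α]
    (hcard : 2 ≤ Fintype.card α)
    (c : Finset α → α) (hc : ∀ A : Finset α, A.Nonempty → c A ∈ A)
    (hCSSLA : ∃ (rhd : α → α → Prop) (Γ : Finset α → Set α),
      IsLinearRel rhd ∧ IsChoiceCorr Γ ∧ SelectiveFilter rhd Γ ∧
      ∀ A : Finset α, A.Nonempty → maxSet rhd (Γ A) = {c A}) :
    ∃ (rhd : α → α → Prop) (Γ : Finset α → Set α),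
      IsLinearRel rhd ∧ IsChoiceCorr Γ ∧ SelectiveFilter rhd Γ ∧
      (∀ A : Finset α, A.Nonempty → maxSet rhd (Γ A) = {c A}) ∧
      ∃ A : Finset α, A.Nonempty ∧ Γ A ⊂ ↑A := by
  obtain ⟨rhd, Γ, hlin, hcorr, hfil, hmax⟩ := hCSSLA
  have hasym : ∀ x, ¬ rhd x x := fun x h => hlin.1 x x h h
  -- key: c (B.erase x) = c B when x ∈ B, x ≠ c B
  have key : ∀ B : Finset α, B.Nonempty → ∀ x ∈ B, x ≠ c B → c (B.erase x) = c B := by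
    intro B hB x hxB hxc
    have hcB : c B ∈ maxSet rhd (Γ B) := by rw [hmax B hB]; rfl
    obtain ⟨hcBΓ, hund⟩ := hcB
    have hnotmax : ¬ IsMaxOf rhd (Γ B) x := by
      rintro ⟨hxΓ, hbeat⟩
      exact hund x hxΓ (hbeat (c B) hcBΓ (Ne.symm hxc))
    have heq := hfil B hB x hxB hnotmax
    have hne : (B.erase x).Nonempty := ⟨c B, Finset.mem_erase.2 ⟨Ne.symm hxc, hc B hB⟩⟩
    have hcBmem : c B ∈ maxSet rhd (Γ (B.erase x)) := by
      rw [← heq]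
      refine ⟨⟨hcBΓ, Ne.symm hxc⟩, ?_⟩
      intro w hw
      exact hund w hw.1
    rw [hmax _ hne] at hcBmem
    exact hcBmem.symm
  refine ⟨rhd, fun A => {c A}, hlin, ?_, ?_, ?_, ?_⟩
  · intro A hA
    exact ⟨⟨c A, rfl⟩, by simpa using hc A hA⟩
  · intro B hB x hxB hnm
    have hxc : x ≠ c B := by
      rintro rfl
      exact hnm ⟨rfl, fun w hw hwne => absurd hw hwne⟩
    have : ({c B} : Set α) \ {x} = {c B} := by
      ext z; simp only [Set.mem_diff, Set.mem_singleton_iff]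
      constructor
      · exact fun h => h.1
      · rintro rfl; exact ⟨rfl, Ne.symm hxc⟩
    rw [this]
    exact congrArg (fun a => ({a} : Set α)) (key B hB x hxB hxc).symm
  · intro A hA
    ext z
    simp only [maxSet, Set.mem_setOf_eq, Set.mem_singleton_iff]
    constructor
    · exact fun h => h.1
    · rintro rfl
      exact ⟨rfl, fun w hw => by rw [hw]; exact hasym _⟩
  · have : Nonempty α := Fintype.card_pos_iff.mp (by omega)
    refine ⟨Finset.univ, Finset.univ_nonempty, ?_⟩
    obtain ⟨y, hy⟩ := Fintype.exists_ne_of_one_lt_card (by omega) (c Finset.univ)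
    constructor
    · intro z hz; simp
    · intro h
      have := h (Finset.mem_coe.2 (Finset.mem_univ y))
      simp at this
      exact hy this
end

section
/- Let c be a choice function on a finite nonempty set X that is a choice with competitive limited attention, and let (Γ,▷) be an explanation by consideration of c (▷ a linear order, Γ a competitive attention filter with respect to ▷, and c(A) = max(Γ(A),▷) for every menu A). (1) If there are a menu A and distinct x,y ∈ A such that A∖{x} is nonempty and y = c(A) ≠ c(A∖{x}), then x ∈ Γ(A), x ≠ min(Γ(A),▷), and y ▷ x. (2) If there are x,y ∈ X and a menu A such that y = c({x,y}) ≠ c(A ∪ {x,y}) = x, then either [A ⊆ ]x,y[_▷, x ∈ Γ({x,y}), y ▷ x, and y ∉ Γ(A ∪ {x,y})], or A ∖ (x,y)°_▷ is nonempty, where (x,y)°_▷ = ]x,y[_▷ if y ▷ x and (x,y)°_▷ = ]y,x[_▷ if x ▷ y. -/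
variable {α : Type*}

/-- The open interval ]x,y[ with respect to ▷: {z : z ▷ x and y ▷ z}. -/
def OpenInt (rhd : α → α → Prop) (x y : α) : Set α := {z | rhd z x ∧ rhd y z}

/-- (x,y)°_▷ : the open interval between x and y, whichever way they are ordered by ▷. -/
def RingInt (rhd : α → α → Prop) (x y : α) : Set α :=
  {z | (rhd y x ∧ z ∈ OpenInt rhd x y) ∨ (rhd x y ∧ z ∈ OpenInt rhd y x)}

/-- Γ is a competitive attention filter with respect to the linear order ▷. -/
def CompetitiveFilter [DecidableEq α] (rhd : α → α → Prop) (Γ : Finset α → Set α) : Prop :=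
  (∀ A : Finset α, A.Nonempty → ∀ x ∈ A, x ∉ Γ A → Γ A = Γ (A.erase x)) ∧
  (∀ A : Finset α, A.Nonempty → ∃ m : α, IsMinOf rhd ↑A m ∧
    (Γ A = {m} ∨ ((A.erase m).Nonempty ∧ Γ (A.erase m) = Γ A \ {m}))) ∧
  (∀ x y : α, ∀ A : Finset α, A.Nonempty → ↑A ⊆ OpenInt rhd x y →
    y ∉ Γ {x, y} → y ∉ Γ (A ∪ {x, y}))

section Helpers

variable [DecidableEq α] {c : Finset α → α} {rhd : α → α → Prop} {Γ : Finset α → Set α}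

lemma min_unique_aux (hlin : IsLinearRel rhd) {S : Set α} {a b : α}
    (ha : IsMinOf rhd S a) (hb : IsMinOf rhd S b) : a = b := by
  by_contra h
  exact hlin.1 _ _ (ha.2 b hb.1 (Ne.symm h)) (hb.2 a ha.1 h)

lemma shrink_aux (hcorr : IsChoiceCorr Γ)
    (ha : ∀ A : Finset α, A.Nonempty → ∀ x ∈ A, x ∉ Γ A → Γ A = Γ (A.erase x)) :
    ∀ n (B T : Finset α), B.card ≤ n → T ⊆ B → T.Nonempty → Γ B ⊆ ↑T → Γ T = Γ B := by
  intro n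
  induction n with
  | zero =>
    intro B T hn hTB hT _
    have : B = ∅ := Finset.card_eq_zero.mp (Nat.le_zero.mp hn)
    subst this
    exact absurd (Finset.subset_empty.mp hTB) hT.ne_empty
  | succ n ih =>
    intro B T hn hTB hT hΓ
    by_cases hBT : B ⊆ T
    · rw [Finset.Subset.antisymm hTB hBT]
    · obtain ⟨z, hzB, hzT⟩ := Finset.not_subset.mp hBT
      have hzΓ : z ∉ Γ B := fun h => hzT (hΓ h)
      have heq := ha B (hT.mono hTB) z hzB hzΓ
      have hTBz : T ⊆ B.erase z := Finset.subset_erase.mpr ⟨hTB, fun h => hzT h⟩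
      have hcard : (B.erase z).card ≤ n := by
        have h1 := Finset.card_erase_of_mem hzB
        have h2 := Finset.card_pos.mpr ⟨z, hzB⟩
        omega
      have := ih (B.erase z) T hcard hTBz hT (by rw [← heq]; exact hΓ)
      rw [this, heq]

lemma choice_max_aux (hexp : ∀ A : Finset α, A.Nonempty → maxSet rhd (Γ A) = {c A})
    (S : Finset α) (hS : S.Nonempty) : c S ∈ Γ S ∧ ∀ w ∈ Γ S, ¬ rhd w (c S) := by
  have h : c S ∈ maxSet rhd (Γ S) := by rw [hexp S hS]; rfl
  exact ⟨h.1, h.2⟩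

lemma choice_eq_aux (hexp : ∀ A : Finset α, A.Nonempty → maxSet rhd (Γ A) = {c A})
    (S : Finset α) (hS : S.Nonempty) (y : α) (h1 : y ∈ Γ S) (h2 : ∀ w ∈ Γ S, ¬ rhd w y) :
    c S = y := by
  have h : y ∈ maxSet rhd (Γ S) := ⟨h1, h2⟩
  rw [hexp S hS] at h
  exact h.symm

/-- Main lemma: removing the ▷-minimum of the consideration set does not change the choice
(provided the consideration set is not a singleton). -/
lemma main_lemma_aux (hlin : IsLinearRel rhd) (hcorr : IsChoiceCorr Γ)
    (hfil : CompetitiveFilter rhd Γ)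
    (hexp : ∀ A : Finset α, A.Nonempty → maxSet rhd (Γ A) = {c A}) :
    ∀ n (A : Finset α), A.card ≤ n → A.Nonempty → ∀ x, x ∈ Γ A → IsMinOf rhd (Γ A) x →
      Γ A ≠ {x} → c (A.erase x) = c A := by
  intro n
  induction n with
  | zero =>
    intro A hn hA
    exact absurd (Finset.card_eq_zero.mp (Nat.le_zero.mp hn)) hA.ne_empty
  | succ n ih =>
    intro A hn hA x hxΓ hmin hne
    obtain ⟨hy1, hy2⟩ := choice_max_aux hexp A hA
    have hxA : x ∈ A := (hcorr A hA).2 hxΓ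
    have hyx : c A ≠ x := by
      intro h
      apply hne
      apply Set.eq_singleton_iff_unique_mem.mpr ⟨hxΓ, ?_⟩
      intro w hw
      by_contra hwx
      exact (h ▸ hy2) w hw (hmin.2 w hw hwx)
    obtain ⟨m, hm, hb⟩ := hfil.2.1 A hA
    have hmA : m ∈ A := hm.1
    rcases hb with hΓm | ⟨hAm, hΓm⟩
    · have hxm : x = m := Set.mem_singleton_iff.mp (hΓm ▸ hxΓ)
      exact absurd (hxm ▸ hΓm) hne
    · by_cases hxm : x = m
      · subst hxm
        apply choice_eq_aux hexp (A.erase x) hAm (c A)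
        · rw [hΓm]; exact ⟨hy1, hyx⟩
        · intro w hw; rw [hΓm] at hw; exact hy2 w hw.1
      · have hmx : m ≠ x := Ne.symm hxm
        have hmΓ : m ∉ Γ A := fun h =>
          hlin.1 _ _ (hm.2 x hxA hxm) (hmin.2 m h hmx)
        have hΓA' : Γ (A.erase m) = Γ A := by
          rw [hΓm, Set.diff_singleton_eq_self hmΓ]
        have hcA' : c (A.erase m) = c A :=
          choice_eq_aux hexp (A.erase m) hAm (c A) (by rw [hΓA']; exact hy1)
            (by rw [hΓA']; exact hy2)
        have hcard : (A.erase m).card ≤ n := by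
          have h1 := Finset.card_erase_of_mem hmA
          have h2 := Finset.card_pos.mpr ⟨m, hmA⟩
          omega
        have hIH : c ((A.erase m).erase x) = c (A.erase m) :=
          ih (A.erase m) hcard hAm x (by rw [hΓA']; exact hxΓ)
            (by rw [hΓA']; exact hmin) (by rw [hΓA']; exact hne)
        have hceq : c ((A.erase x).erase m) = c A := by
          rw [Finset.erase_right_comm]; rw [hIH, hcA']
        have hyA : c A ∈ A := (hcorr A hA).2 hy1
        have hym : c A ≠ m := fun e => hmΓ (e ▸ hy1)
        have hCne : (A.erase x).Nonempty := ⟨c A, Finset.mem_erase.mpr ⟨hyx, hyA⟩⟩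
        have hmC : m ∈ A.erase x := Finset.mem_erase.mpr ⟨hmx, hmA⟩
        obtain ⟨m', hm', hb'⟩ := hfil.2.1 (A.erase x) hCne
        have hm'm : m' = m := min_unique_aux hlin hm'
          ⟨hmC, fun w hw hwm => hm.2 w (Finset.mem_of_mem_erase hw) hwm⟩
        subst hm'm
        rcases hb' with hCm | ⟨hCm', hΓC⟩
        · -- hard case: Γ (A.erase x) = {m'}; derive a contradiction via axiom (c)
          exfalso
          have hYC : c A ∈ A.erase x := Finset.mem_erase.mpr ⟨hyx, hyA⟩
          have hpsub : ({m', c A} : Finset α) ⊆ A.erase x := by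
            intro w hw
            rcases Finset.mem_insert.mp hw with rfl | hw
            · exact hmC
            · rw [Finset.mem_singleton.mp hw]; exact hYC
          have hΓpair : Γ {m', c A} = {m'} := by
            rw [shrink_aux hcorr hfil.1 (A.erase x).card (A.erase x) {m', c A} le_rfl
              hpsub ⟨m', Finset.mem_insert_self _ _⟩
              (by rw [hCm]; intro w hw; rw [Set.mem_singleton_iff.mp hw]
                  exact Finset.mem_coe.mpr (Finset.mem_insert_self _ _))]
            exact hCm
          have hynp : c A ∉ Γ {m', c A} := by
            rw [hΓpair]; exact fun h => hym (Set.mem_singleton_iff.mp h)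
          haveI : DecidablePred (fun z => ¬ rhd z (c A)) := Classical.decPred _
          set A₁ := A.filter (fun z => ¬ rhd z (c A)) with hA₁def
          have hΓsubA₁ : Γ A ⊆ ↑A₁ := fun w hw =>
            Finset.mem_coe.mpr (Finset.mem_filter.mpr ⟨(hcorr A hA).2 hw, hy2 w hw⟩)
          have hA₁sub : A₁ ⊆ A := Finset.filter_subset _ _
          have hyA₁ : c A ∈ A₁ := Finset.mem_filter.mpr ⟨hyA, fun h => hlin.1 _ _ h h⟩
          have hmA₁ : m' ∈ A₁ :=
            Finset.mem_filter.mpr ⟨hmA, fun h => hlin.1 _ _ (hm.2 (c A) hyA hym) h⟩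
          have hΓA₁ : Γ A₁ = Γ A :=
            shrink_aux hcorr hfil.1 A.card A A₁ le_rfl hA₁sub ⟨_, hyA₁⟩ hΓsubA₁
          set S := (A₁.erase m').erase (c A) with hSdef
          have hxS : x ∈ S := by
            refine Finset.mem_erase.mpr ⟨Ne.symm hyx, Finset.mem_erase.mpr ⟨hxm, ?_⟩⟩
            exact Finset.mem_filter.mpr ⟨hxA, hy2 x hxΓ⟩
          have hSsub : ↑S ⊆ OpenInt rhd m' (c A) := by
            intro z hz
            have hz' := Finset.mem_coe.mp hz
            have hzy : z ≠ c A := (Finset.mem_erase.mp hz').1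
            have hzm : z ≠ m' := (Finset.mem_erase.mp (Finset.mem_erase.mp hz').2).1
            have hzA₁ : z ∈ A₁ := (Finset.mem_erase.mp (Finset.mem_erase.mp hz').2).2
            have hzA : z ∈ A := hA₁sub hzA₁
            have hzny : ¬ rhd z (c A) := (Finset.mem_filter.mp hzA₁).2
            refine ⟨hm.2 z hzA hzm, ?_⟩
            rcases hlin.2.2 (c A) z (Ne.symm hzy) with h | h
            · exact h
            · exact absurd h hzny
          have hkey := hfil.2.2 m' (c A) S ⟨x, hxS⟩ hSsub hynp
          have hunion : S ∪ {m', c A} = A₁ := by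
            ext w
            simp only [hSdef, Finset.mem_union, Finset.mem_erase, Finset.mem_insert,
              Finset.mem_singleton]
            constructor
            · rintro (⟨_, _, h⟩ | rfl | rfl)
              · exact h
              · exact hmA₁
              · exact hyA₁
            · intro hw
              by_cases h1 : w = m'
              · exact Or.inr (Or.inl h1)
              · by_cases h2 : w = c A
                · exact Or.inr (Or.inr h2)
                · exact Or.inl ⟨h2, h1, hw⟩
          rw [hunion, hΓA₁] at hkey
          exact hkey hy1
        · -- normal case
          have hceq' : c ((A.erase x).erase m') = c A := hceq
          have h2 := choice_max_aux hexp ((A.erase x).erase m') hCm'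
          rw [hceq'] at h2
          apply choice_eq_aux hexp (A.erase x) hCne (c A)
          · have : c A ∈ Γ (A.erase x) \ {m'} := by rw [← hΓC]; exact h2.1
            exact this.1
          · intro w hw
            by_cases hwm : w = m'
            · subst hwm
              exact fun h => hlin.1 _ _ (hm.2 (c A) hyA hym) h
            · have hw' : w ∈ Γ ((A.erase x).erase m') := by
                rw [hΓC]; exact ⟨hw, hwm⟩
              exact h2.2 w hw'

end Helpers

/-- necessary conditions on the consideration sets of a choice with
competitive limited attention, inferred from minimal switches. -/
theorem stmt_9 [Fintype α] [DecidableEq α] [Nonempty α]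
    (c : Finset α → α) (hc : ∀ A : Finset α, A.Nonempty → c A ∈ A)
    (rhd : α → α → Prop) (Γ : Finset α → Set α)
    (hlin : IsLinearRel rhd) (hcorr : IsChoiceCorr Γ) (hfil : CompetitiveFilter rhd Γ)
    (hexp : ∀ A : Finset α, A.Nonempty → maxSet rhd (Γ A) = {c A}) :
    (∀ A : Finset α, A.Nonempty → ∀ x y : α, x ∈ A → y ∈ A → x ≠ y →
      (A.erase x).Nonempty → y = c A → c A ≠ c (A.erase x) →
      x ∈ Γ A ∧ ¬ IsMinOf rhd (Γ A) x ∧ rhd y x) ∧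
    (∀ x y : α, ∀ A : Finset α, A.Nonempty →
      y = c ({x, y} : Finset α) → c ({x, y} : Finset α) ≠ c (A ∪ {x, y}) →
      c (A ∪ {x, y}) = x →
      ((↑A ⊆ OpenInt rhd x y ∧ x ∈ Γ {x, y} ∧ rhd y x ∧ y ∉ Γ (A ∪ {x, y})) ∨
        ((↑A : Set α) \ RingInt rhd x y).Nonempty)) := by
  constructor
  · -- Part 1
    intro A hA x y hxA hyA hxy hAx hyc hne
    obtain ⟨hy1, hy2⟩ := choice_max_aux hexp A hA
    have hxΓ : x ∈ Γ A := by
      by_contra hx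
      have heq := hfil.1 A hA x hxA hx
      apply hne
      apply (choice_eq_aux hexp (A.erase x) hAx (c A) ?_ ?_).symm
      · rw [← heq]; exact hy1
      · rw [← heq]; exact hy2
    have hcAx : c A ≠ x := by rw [← hyc]; exact Ne.symm hxy
    refine ⟨hxΓ, ?_, ?_⟩
    · intro hmin
      have hΓne : Γ A ≠ {x} := by
        intro h
        exact hcAx (Set.mem_singleton_iff.mp (h ▸ hy1))
      exact hne (main_lemma_aux hlin hcorr hfil hexp A.card A le_rfl hA x hxΓ hmin hΓne).symm
    · subst hyc
      rcases hlin.2.2 (c A) x hcAx with h | h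
      · exact h
      · exact absurd h (hy2 x hxΓ)
  · -- Part 2
    intro x y A hA hyc hne hxc
    by_cases hsub : (↑A : Set α) ⊆ RingInt rhd x y
    · exfalso
      have hBne : (A ∪ {x, y} : Finset α).Nonempty := hA.mono Finset.subset_union_left
      have hpairne : ({x, y} : Finset α).Nonempty := ⟨x, Finset.mem_insert_self _ _⟩
      have hyx : y ≠ x := fun e => hne (hyc.symm.trans (e.trans hxc.symm))
      obtain ⟨hp1, hp2⟩ := choice_max_aux hexp {x, y} hpairne
      obtain ⟨hB1, hB2⟩ := choice_max_aux hexp (A ∪ {x, y}) hBne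
      rw [← hyc] at hp1 hp2
      rw [hxc] at hB1 hB2
      rcases hlin.2.2 x y (Ne.symm hyx) with hxy | hyxr
      · -- x ▷ y : use axiom (c) with roles swapped
        have hAsub : (↑A : Set α) ⊆ OpenInt rhd y x := by
          intro z hz
          rcases hsub hz with ⟨h1, _⟩ | ⟨_, h2⟩
          · exact absurd hxy (hlin.1 _ _ h1)
          · exact h2
        have hxnp : x ∉ Γ {y, x} := by
          rw [Finset.pair_comm y x]
          exact fun h => hp2 x h hxy
        have := hfil.2.2 y x A hA hAsub hxnp
        rw [Finset.pair_comm y x] at this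
        exact this hB1
      · -- y ▷ x : then x is the minimum of A ∪ {x,y}, forcing Γ (A ∪ {x,y}) = {x}
        have hAsub : (↑A : Set α) ⊆ OpenInt rhd x y := by
          intro z hz
          rcases hsub hz with ⟨_, h2⟩ | ⟨h1, _⟩
          · exact h2
          · exact absurd h1 (hlin.1 _ _ hyxr)
        have hΓB : Γ (A ∪ {x, y}) ⊆ ({x} : Set α) := by
          intro w hw
          by_contra hwx
          have hwx' : w ≠ x := fun e => hwx (e ▸ rfl)
          have hwB : w ∈ A ∪ ({x, y} : Finset α) := (hcorr _ hBne).2 hw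
          have hrw : rhd w x := by
            rcases Finset.mem_union.mp hwB with h | h
            · exact (hAsub (Finset.mem_coe.mpr h)).1
            · rcases Finset.mem_insert.mp h with rfl | h'
              · exact absurd rfl hwx'
              · rw [Finset.mem_singleton.mp h']; exact hyxr
          exact hB2 w hw hrw
        have hΓBeq : Γ (A ∪ {x, y}) = ({x} : Set α) := by
          obtain ⟨w, hw⟩ := (hcorr _ hBne).1
          have : w = x := hΓB hw
          subst this
          exact Set.Subset.antisymm hΓB (by intro z hz; rw [Set.mem_singleton_iff.mp hz]; exact hw)
        have hpairsub : ({x, y} : Finset α) ⊆ A ∪ {x, y} := Finset.subset_union_right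
        have hΓpair : Γ {x, y} = ({x} : Set α) := by
          rw [shrink_aux hcorr hfil.1 (A ∪ {x, y}).card (A ∪ {x, y}) {x, y} le_rfl hpairsub
            hpairne (by rw [hΓBeq]; intro w hw
                        rw [Set.mem_singleton_iff.mp hw]
                        exact Finset.mem_coe.mpr (Finset.mem_insert_self _ _))]
          exact hΓBeq
        rw [hΓpair] at hp1
        exact hyx (Set.mem_singleton_iff.mp hp1)
    · right
      obtain ⟨z, hzA, hz⟩ := Set.not_subset.mp hsub
      exact ⟨z, hzA, hz⟩
end

section
/- Let c be a choice function on a finite nonempty set X that is a choice with limited attention, and let (Γ,▷) be an explanation by consideration of c (▷ a linear order, Γ an attention filter, and c(A) = max(Γ(A),▷) for every menu A). Then for every menu A, S_A ∪ {c(A)} ⊆ Γ(A). -/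
variable {α : Type*}

/-- Γ is an attention filter: removing an unobserved item does not change attention. -/
def AttentionFilter [DecidableEq α] (Γ : Finset α → Set α) : Prop :=
  ∀ B : Finset α, B.Nonempty → ∀ x ∈ B, x ∉ Γ B → Γ B = Γ (B.erase x)

/-- for a choice with limited attention with explanation (Γ,▷),
S_A ∪ {c(A)} ⊆ Γ(A) for every menu A. -/
theorem stmt_10 [Fintype α] [DecidableEq α] [Nonempty α]
    (c : Finset α → α) (hc : ∀ A : Finset α, A.Nonempty → c A ∈ A)
    (rhd : α → α → Prop) (Γ : Finset α → Set α)
    (hlin : IsLinearRel rhd) (hcorr : IsChoiceCorr Γ) (hfil : AttentionFilter Γ)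
    (hexp : ∀ A : Finset α, A.Nonempty → maxSet rhd (Γ A) = {c A}) :
    ∀ A : Finset α, A.Nonempty → {x | SwitchAt c A x} ∪ {c A} ⊆ Γ A := by
  intro A hA x hx
  have hcA : c A ∈ Γ A := by
    have : c A ∈ maxSet rhd (Γ A) := by rw [hexp A hA]; rfl
    exact this.1
  rcases hx with hx | hx
  · obtain ⟨hxA, hne, hxc, hcc⟩ := hx
    by_contra hxΓ
    have hΓeq := hfil A hA x hxA hxΓ
    have : maxSet rhd (Γ A) = maxSet rhd (Γ (A.erase x)) := by rw [hΓeq]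
    rw [hexp A hA, hexp _ hne] at this
    exact hcc (Set.singleton_eq_singleton_iff.mp this)
  · rw [Set.mem_singleton_iff] at hx; rw [hx]; exact hcA
end

section
/- Let c be a choice function on a finite nonempty set X. Then: (1) the choice correspondence ψ^min defined by ψ^min(A) = D_A satisfies Axiom α for choice correspondences (and D_A is nonempty for every menu A, since c(A) ∈ D_A). (2) If c is consistent with basic rationalization theory via (ψ,≻), i.e. ψ is a choice correspondence satisfying Axiom α, ≻ is an asymmetric relation on X, and max(ψ(A),≻) = {c(A)} for every menu A, then ψ^min(A) ⊆ ψ(A) for every menu A. (3) Likewise, if c is consistent with ordered rationalization theory via (ψ,▷), where ▷ is a linear order, ψ satisfies Axiom α, and max(ψ(A),▷) = {c(A)} for every menu A, then ψ^min(A) ⊆ ψ(A) for every menu A. -/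
variable {α : Type*}

/-- D_A = {x ∈ A : x = c(B) for some menu B ⊇ A};  ψ^min(A) = D_A. -/
def DSet (c : Finset α → α) (A : Finset α) : Set α :=
  {x | x ∈ A ∧ ∃ B : Finset α, A ⊆ B ∧ c B = x}

/-- ψ^min satisfies Axiom α (and has nonempty values, as c(A) ∈ D_A), and
whenever c is consistent with basic (resp. ordered) rationalization theory via (ψ,≻),
ψ^min(A) ⊆ ψ(A) for every menu A. -/
theorem stmt_12 [Fintype α] [DecidableEq α] [Nonempty α]
    (c : Finset α → α) (hc : ∀ A : Finset α, A.Nonempty → c A ∈ A) :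
    ((∀ A : Finset α, A.Nonempty → c A ∈ DSet c A) ∧ AxiomAlpha (DSet c)) ∧
    (∀ (ψ : Finset α → Set α) (succ : α → α → Prop),
      IsChoiceCorr ψ → AxiomAlpha ψ → (∀ x y : α, succ x y → ¬ succ y x) →
      (∀ A : Finset α, A.Nonempty → maxSet succ (ψ A) = {c A}) →
      ∀ A : Finset α, A.Nonempty → DSet c A ⊆ ψ A) ∧
    (∀ (ψ : Finset α → Set α) (rhd : α → α → Prop),
      IsChoiceCorr ψ → AxiomAlpha ψ → IsLinearRel rhd →
      (∀ A : Finset α, A.Nonempty → maxSet rhd (ψ A) = {c A}) →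
      ∀ A : Finset α, A.Nonempty → DSet c A ⊆ ψ A) := by
  have key : ∀ (ψ : Finset α → Set α) (r : α → α → Prop),
      AxiomAlpha ψ → (∀ A : Finset α, A.Nonempty → maxSet r (ψ A) = {c A}) →
      ∀ A : Finset α, A.Nonempty → DSet c A ⊆ ψ A := by
    intro ψ r hα hmax A hA x hx
    obtain ⟨hxA, B, hAB, hcB⟩ := hx
    have hBne : B.Nonempty := hA.mono hAB
    have hcBψ : c B ∈ ψ B := by
      have : c B ∈ maxSet r (ψ B) := by rw [hmax B hBne]; rfl
      exact this.1
    have : x ∈ ψ B := hcB ▸ hcBψ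
    exact hα A B hA hAB x hxA this
  refine ⟨⟨fun A hA => ⟨hc A hA, A, subset_refl A, rfl⟩, ?_⟩,
    fun ψ succ _ hα _ hmax => key ψ succ hα hmax,
    fun ψ rhd _ hα _ hmax => key ψ rhd hα hmax⟩
  intro A B hA hAB x hxA hxB
  obtain ⟨_, B', hBB', hcB'⟩ := hxB
  exact ⟨hxA, B', hAB.trans hBB', hcB'⟩
end

section
/- Let c be a choice function on a finite nonempty set X. Then: (1) c is consistent with minimal basic rationalization theory if and only if c is consistent with basic rationalization theory; (2) c is consistent with minimal ordered rationalization theory if and only if c is consistent with ordered rationalization theory. -/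
variable {α : Type*}

/- Auxiliary lemmas -/

lemma cA_mem_DSet (c : Finset α → α) (hc : ∀ A : Finset α, A.Nonempty → c A ∈ A)
    {A : Finset α} (hA : A.Nonempty) : c A ∈ DSet c A :=
  ⟨hc A hA, A, subset_refl A, rfl⟩

lemma DSet_choiceCorr (c : Finset α → α) (hc : ∀ A : Finset α, A.Nonempty → c A ∈ A) :
    IsChoiceCorr (fun A => DSet c A) := by
  intro A hA
  exact ⟨⟨c A, cA_mem_DSet c hc hA⟩, fun x hx => Finset.mem_coe.mpr hx.1⟩

lemma DSet_axiomAlpha (c : Finset α → α) : AxiomAlpha (fun A => DSet c A) := by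
  rintro A B hA hAB x hxA ⟨hxB, C, hBC, hcC⟩
  exact ⟨hxA, C, hAB.trans hBC, hcC⟩

lemma DSet_subset (c : Finset α → α) {ψ : Finset α → Set α} {succ : α → α → Prop}
    (hα : AxiomAlpha ψ)
    (hmax : ∀ A : Finset α, A.Nonempty → maxSet succ (ψ A) = {c A})
    {A : Finset α} (hA : A.Nonempty) : DSet c A ⊆ ψ A := by
  rintro x ⟨hxA, B, hAB, hcB⟩
  have hBne : B.Nonempty := ⟨x, hAB hxA⟩
  have hmem : c B ∈ maxSet succ (ψ B) := by rw [hmax B hBne]; rfl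
  exact hα A B hA hAB x hxA (hcB ▸ hmem.1)

/-- c is consistent with minimal basic (resp. minimal ordered)
rationalization theory iff it is consistent with basic (resp. ordered)
rationalization theory. -/
theorem stmt_13 [Fintype α] [DecidableEq α] [Nonempty α]
    (c : Finset α → α) (hc : ∀ A : Finset α, A.Nonempty → c A ∈ A) :
    ((∃ succ : α → α → Prop, (∀ x y : α, succ x y → ¬ succ y x) ∧
        ∀ A : Finset α, A.Nonempty → maxSet succ (DSet c A) = {c A}) ↔
      (∃ (ψ : Finset α → Set α) (succ : α → α → Prop),
        IsChoiceCorr ψ ∧ AxiomAlpha ψ ∧ (∀ x y : α, succ x y → ¬ succ y x) ∧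
        ∀ A : Finset α, A.Nonempty → maxSet succ (ψ A) = {c A})) ∧
    ((∃ rhd : α → α → Prop, IsLinearRel rhd ∧
        ∀ A : Finset α, A.Nonempty → maxSet rhd (DSet c A) = {c A}) ↔
      (∃ (ψ : Finset α → Set α) (rhd : α → α → Prop),
        IsChoiceCorr ψ ∧ AxiomAlpha ψ ∧ IsLinearRel rhd ∧
        ∀ A : Finset α, A.Nonempty → maxSet rhd (ψ A) = {c A})) := by
  constructor
  · constructor
    · rintro ⟨succ, hasym, hmax⟩
      exact ⟨fun A => DSet c A, succ, DSet_choiceCorr c hc, DSet_axiomAlpha c, hasym, hmax⟩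
    · rintro ⟨ψ, succ, hcc, hα, hasym, hmax⟩
      -- ¬ succ x y whenever y = c B and x ∈ D_B
      have nolose : ∀ x y : α, (∃ B : Finset α, c B = y ∧ x ∈ DSet c B) → ¬ succ x y := by
        rintro x y ⟨B, hcB, hxB⟩
        have hBne : B.Nonempty := ⟨x, hxB.1⟩
        have hm : c B ∈ maxSet succ (ψ B) := by rw [hmax B hBne]; rfl
        have hxψ : x ∈ ψ B := DSet_subset c hα hmax hBne hxB
        exact hcB ▸ hm.2 x hxψ
      -- succ x y ∨ succ y x whenever x ≠ y, x = c A, y ∈ D_A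
      have win : ∀ x y : α, x ≠ y → (∃ A : Finset α, c A = x ∧ y ∈ DSet c A) →
          succ x y ∨ succ y x := by
        rintro x y hxy ⟨A, hcA, hyA⟩
        have hAne : A.Nonempty := ⟨y, hyA.1⟩
        have hyψ : y ∈ ψ A := DSet_subset c hα hmax hAne hyA
        have hxψ : x ∈ ψ A := by
          have hm : c A ∈ maxSet succ (ψ A) := by rw [hmax A hAne]; rfl
          exact hcA ▸ hm.1
        have hxA : x ∈ A := (hcc A hAne).2 hxψ
        have hyA' : y ∈ A := (hcc A hAne).2 hyψ
        have hPA : ({x, y} : Finset α) ⊆ A := by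
          intro z hz
          rcases Finset.mem_insert.mp hz with rfl | hz
          · exact hxA
          · exact (Finset.mem_singleton.mp hz) ▸ hyA'
        have hPne : ({x, y} : Finset α).Nonempty := ⟨x, Finset.mem_insert_self x {y}⟩
        have hxP : x ∈ ψ {x, y} := hα {x, y} A hPne hPA x (Finset.mem_insert_self x {y}) hxψ
        have hyP : y ∈ ψ {x, y} :=
          hα {x, y} A hPne hPA y
            (Finset.mem_insert_of_mem (Finset.mem_singleton_self y)) hyψ
        have hmP := hmax {x, y} hPne
        have hcP := hc {x, y} hPne
        have hsub : ψ ({x, y} : Finset α) ⊆ ↑({x, y} : Finset α) := (hcc {x, y} hPne).2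
        rcases Finset.mem_insert.mp hcP with hcx | hcy
        · -- c {x,y} = x : y is beaten by something in ψ {x,y}
          left
          have hyne : y ∉ maxSet succ (ψ {x, y}) := by
            rw [hmP, hcx]
            exact fun h => hxy (h.symm)
          have : ∃ w ∈ ψ ({x, y} : Finset α), succ w y := by
            by_contra hno
            push_neg at hno
            exact hyne ⟨hyP, hno⟩
          obtain ⟨w, hwψ, hwy⟩ := this
          rcases Finset.mem_insert.mp (hsub hwψ) with hw | hw
          · exact hw ▸ hwy
          · rw [Finset.mem_singleton.mp hw] at hwy
            exact absurd hwy (fun h => hasym y y h h)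
        · -- c {x,y} = y : x is beaten
          right
          have hcy' : c ({x, y} : Finset α) = y := Finset.mem_singleton.mp hcy
          have hxne : x ∉ maxSet succ (ψ {x, y}) := by
            rw [hmP, hcy']
            exact fun h => hxy h
          have : ∃ w ∈ ψ ({x, y} : Finset α), succ w x := by
            by_contra hno
            push_neg at hno
            exact hxne ⟨hxP, hno⟩
          obtain ⟨w, hwψ, hwx⟩ := this
          rcases Finset.mem_insert.mp (hsub hwψ) with hw | hw
          · rw [hw] at hwx
            exact absurd hwx (fun h => hasym x x h h)
          · exact (Finset.mem_singleton.mp hw) ▸ hwx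
      -- the new asymmetric relation
      refine ⟨fun x y => x ≠ y ∧ ∃ A : Finset α, c A = x ∧ y ∈ DSet c A, ?_, ?_⟩
      · rintro x y ⟨hxy, hwx⟩ ⟨hyx, hwy⟩
        have h1 : ¬ succ x y := nolose x y hwy
        have h2 : ¬ succ y x := nolose y x hwx
        rcases win x y hxy hwx with h | h
        · exact h1 h
        · exact h2 h
      · intro A hA
        have hcAD : c A ∈ DSet c A := cA_mem_DSet c hc hA
        ext z
        constructor
        · rintro ⟨hzD, hno⟩
          by_contra hne
          have hne' : z ≠ c A := hne
          exact hno (c A) hcAD ⟨fun h => hne' h.symm, A, rfl, hzD⟩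
        · rintro rfl
          refine ⟨hcAD, ?_⟩
          rintro w hwD ⟨hwne, B, hcB, hzB⟩
          -- w ≻' c A with c A ∈ D_B, c B = w ; but also c A ≻' w
          have h1 : ¬ succ w (c A) := nolose w (c A) ⟨A, rfl, hwD⟩
          have h2 : ¬ succ (c A) w := nolose (c A) w ⟨B, hcB, hzB⟩
          rcases win w (c A) hwne ⟨B, hcB, hzB⟩ with h | h
          · exact h1 h
          · exact h2 h
  · constructor
    · rintro ⟨rhd, hlin, hmax⟩
      exact ⟨fun A => DSet c A, rhd, DSet_choiceCorr c hc, DSet_axiomAlpha c, hlin, hmax⟩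
    · rintro ⟨ψ, rhd, hcc, hα, hlin, hmax⟩
      refine ⟨rhd, hlin, ?_⟩
      intro A hA
      have hcAD : c A ∈ DSet c A := cA_mem_DSet c hc hA
      have hm : c A ∈ maxSet rhd (ψ A) := by rw [hmax A hA]; rfl
      ext z
      constructor
      · rintro ⟨hzD, hno⟩
        have hzψ : z ∈ ψ A := DSet_subset c hα hmax hA hzD
        by_contra hne
        rcases hlin.2.2 z (c A) hne with h | h
        · exact hm.2 z hzψ h
        · exact hno (c A) hcAD h
      · rintro rfl
        exact ⟨hcAD, fun w hwD => hm.2 w (DSet_subset c hα hmax hA hwD)⟩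
end

section
/- Let c be a choice function on a finite nonempty set X. Then: (1) the choice correspondence ψ*^min defined by ψ*^min(A) = S_A^↑ ∪ D_A satisfies Axiom α for choice correspondences. (2) For every choice correspondence ψ satisfying Axiom α such that Γ^min(A) ⊆ ψ(A) for every menu A (where Γ^min(A) = S_A ∪ {c(A)}), one has Γ^min(A) ⊆ ψ*^min(A) ⊆ ψ(A) for every menu A. -/
variable {α : Type*}

/-- S_A^↑ = {x ∈ A : x ∈ S_B for some menu B ⊇ A}. -/
def SUp [DecidableEq α] (c : Finset α → α) (A : Finset α) : Set α :=
  {x | x ∈ A ∧ ∃ B : Finset α, A ⊆ B ∧ SwitchAt c B x}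

/-- ψ*^min(A) = S_A^↑ ∪ D_A. -/
def PsiStar [DecidableEq α] (c : Finset α → α) (A : Finset α) : Set α :=
  SUp c A ∪ DSet c A

/-- Γ^min(A) = S_A ∪ {c(A)}. -/
def GammaMin [DecidableEq α] (c : Finset α → α) (A : Finset α) : Set α :=
  insert (c A) {x | SwitchAt c A x}

/-- ψ*^min satisfies Axiom α, and for every choice correspondence ψ
satisfying Axiom α that contains Γ^min, one has Γ^min ⊆ ψ*^min ⊆ ψ on every menu. -/
theorem stmt_14 [Fintype α] [DecidableEq α] [Nonempty α]
    (c : Finset α → α) (hc : ∀ A : Finset α, A.Nonempty → c A ∈ A) :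
    AxiomAlpha (PsiStar c) ∧
    (∀ ψ : Finset α → Set α, IsChoiceCorr ψ → AxiomAlpha ψ →
      (∀ A : Finset α, A.Nonempty → GammaMin c A ⊆ ψ A) →
      ∀ A : Finset α, A.Nonempty →
        GammaMin c A ⊆ PsiStar c A ∧ PsiStar c A ⊆ ψ A) := by
  constructor
  · intro A B hA hAB x hxA hxB
    rcases hxB with ⟨_, C, hBC, hS⟩ | ⟨_, C, hBC, hcC⟩
    · exact Or.inl ⟨hxA, C, hAB.trans hBC, hS⟩
    · exact Or.inr ⟨hxA, C, hAB.trans hBC, hcC⟩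
  · intro ψ hψ hα hΓ A hA
    constructor
    · intro x hx
      rcases hx with rfl | hS
      · exact Or.inr ⟨hc A hA, A, subset_rfl, rfl⟩
      · exact Or.inl ⟨hS.1, A, subset_rfl, hS⟩
    · intro x hx
      rcases hx with ⟨hxA, B, hAB, hS⟩ | ⟨hxA, B, hAB, hcB⟩
      · exact hα A B hA hAB x hxA (hΓ B (hA.mono hAB) (Or.inr hS))
      · exact hα A B hA hAB x hxA (hΓ B (hA.mono hAB) (Or.inl hcB.symm))
end

section
/- Let c be a choice function on a finite nonempty set X that is a choice with limited attention, and let (Γ,▷) be an explanation by consideration of c (▷ a linear order, Γ an attention filter, and c(A) = max(Γ(A),▷) for every menu A). Define Γ_▷(A) = {y ∈ A : y = c(A) or c(A) ▷ y}. Then for every menu A, Γ_▷(A) = Γ_▷(Γ_▷(A)), where the right-hand side is Γ_▷ applied to the menu Γ_▷(A). -/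
variable {α : Type*}

open Classical in
/-- Γ_▷(A) = {y ∈ A : y = c(A) or c(A) ▷ y}, as a finset (so it can serve as a menu). -/
noncomputable def GammaD (c : Finset α → α) (rhd : α → α → Prop) (A : Finset α) :
    Finset α :=
  A.filter (fun y => y = c A ∨ rhd (c A) y)


lemma gamma_stable [DecidableEq α] {Γ : Finset α → Set α} (hfil : AttentionFilter Γ) :
    ∀ n (A B : Finset α), (A \ B).card = n → B ⊆ A → B.Nonempty → Γ A ⊆ ↑B → Γ B = Γ A := by
  intro n
  induction n with
  | zero =>
    intro A B h hBA _ _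
    have : A = B := Finset.Subset.antisymm (by
      intro x hx
      by_contra hxB
      have : x ∈ A \ B := Finset.mem_sdiff.2 ⟨hx, hxB⟩
      simp [Finset.card_eq_zero.mp h] at this) hBA
    rw [this]
  | succ n ih =>
    intro A B h hBA hBne hsub
    have hne : (A \ B).Nonempty := Finset.card_pos.mp (by omega)
    obtain ⟨x, hx⟩ := hne
    have hxA : x ∈ A := (Finset.mem_sdiff.mp hx).1
    have hxB : x ∉ B := (Finset.mem_sdiff.mp hx).2
    have hxΓ : x ∉ Γ A := fun hxΓ => hxB (hsub hxΓ)
    have hAne : A.Nonempty := ⟨x, hxA⟩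
    have heq := hfil A hAne x hxA hxΓ
    have hsub' : Γ (A.erase x) ⊆ ↑B := heq ▸ hsub
    have hBA' : B ⊆ A.erase x := fun y hy =>
      Finset.mem_erase.2 ⟨fun h' => hxB (h' ▸ hy), hBA hy⟩
    have hcard : (A.erase x \ B).card = n := by
      have : A.erase x \ B = (A \ B).erase x := by
        ext y; simp [Finset.mem_erase, Finset.mem_sdiff]; tauto
      rw [this, Finset.card_erase_of_mem hx, h]
      omega
    rw [ih (A.erase x) B hcard hBA' hBne hsub', heq]

/-- for a choice with limited attention with explanation (Γ,▷), the
correspondence Γ_▷ is idempotent: Γ_▷(A) = Γ_▷(Γ_▷(A)) for every menu A. -/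
theorem stmt_17 [Fintype α] [DecidableEq α] [Nonempty α]
    (c : Finset α → α) (hc : ∀ A : Finset α, A.Nonempty → c A ∈ A)
    (rhd : α → α → Prop) (Γ : Finset α → Set α)
    (hlin : IsLinearRel rhd) (hcorr : IsChoiceCorr Γ) (hfil : AttentionFilter Γ)
    (hexp : ∀ A : Finset α, A.Nonempty → maxSet rhd (Γ A) = {c A}) :
    ∀ A : Finset α, A.Nonempty → GammaD c rhd A = GammaD c rhd (GammaD c rhd A) := by
  classical
  intro A hA
  set D := GammaD c rhd A with hD
  have hcA : c A ∈ D := by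
    simp [hD, GammaD, hc A hA]
  have hDne : D.Nonempty := ⟨_, hcA⟩
  have hmax : c A ∈ maxSet rhd (Γ A) := by rw [hexp A hA]; rfl
  have hsub : Γ A ⊆ ↑D := by
    intro y hy
    have hyA : y ∈ (A : Set α) := (hcorr A hA).2 hy
    by_cases hyc : y = c A
    · simpa [hD, GammaD, hyc] using (hc A hA)
    · have : rhd (c A) y := by
        rcases hlin.2.2 (c A) y (fun h => hyc h.symm) with h | h
        · exact h
        · exact absurd h (hmax.2 y hy)
      have hyA' : y ∈ A := hyA
      simp only [hD, GammaD, Finset.coe_filter, Set.mem_setOf_eq]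
      exact ⟨hyA', Or.inr this⟩
  have hDA : D ⊆ A := by
    intro y hy
    rw [hD] at hy
    simp only [GammaD, Finset.mem_filter] at hy
    exact hy.1
  have hΓD : Γ D = Γ A := gamma_stable hfil _ A D rfl hDA hDne hsub
  have hcD : c D = c A := by
    have h1 := hexp D hDne
    have h2 := hexp A hA
    rw [hΓD, h2] at h1
    exact (Set.singleton_eq_singleton_iff.mp h1.symm)
  ext y
  constructor
  · intro h
    have h' := h
    rw [hD] at h'
    simp only [GammaD, Finset.mem_filter] at h' ⊢
    rw [hcD]
    exact ⟨h, h'.2⟩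
  · intro h
    simp only [GammaD, Finset.mem_filter] at h
    exact h.1
end

section
/- Let c be a choice function on a finite nonempty set X that is list rational via a list 𝐟 (a linear order on X). Then for all x,y ∈ X with c({x,y}) = x, and for every menu A with A ⊆ ]x,y[_𝐟 = {z ∈ X : z 𝐟 x and y 𝐟 z}, one has y ≠ c(A ∪ {x,y}). -/
variable {α : Type*}

/-- if c is list rational via the list 𝐟, c({x,y}) = x, and A is a menu
contained in ]x,y[_𝐟 = {z : z 𝐟 x and y 𝐟 z}, then y ≠ c(A ∪ {x,y}). -/
theorem stmt_18 [Fintype α] [DecidableEq α] [Nonempty α]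
    (c : Finset α → α) (hc : ∀ A : Finset α, A.Nonempty → c A ∈ A)
    (f : α → α → Prop) (hf : IsLinearRel f)
    (hLR : ∀ A : Finset α, 1 < A.card → ∃ ℓ : α, IsMinOf f ↑A ℓ ∧
      c A = c ({c (A.erase ℓ), ℓ} : Finset α)) :
    ∀ x y : α, c ({x, y} : Finset α) = x →
      ∀ A : Finset α, A.Nonempty → (↑A : Set α) ⊆ {z | f z x ∧ f y z} →
        c (A ∪ {x, y}) ≠ y := by
  obtain ⟨hasym, htrans, htot⟩ := hf
  intro x y hxy A
  induction A using Finset.strongInduction with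
  | _ A ih =>
  intro hA hsub
  -- basic facts
  obtain ⟨z, hz⟩ := hA
  have hzprop := hsub hz
  have hxney : x ≠ y := by
    rintro rfl
    exact hasym z x hzprop.1 hzprop.2
  have hxA : x ∉ A := fun h => hasym x x (hsub h).1 (hsub h).1
  have hyA : y ∉ A := fun h => hasym y y (hsub h).2 (hsub h).2
  set B := A ∪ ({x, y} : Finset α) with hB
  have hxB : x ∈ B := by simp [hB]
  have hyB : y ∈ B := by simp [hB]
  have hcard : 1 < B.card := Finset.one_lt_card.mpr ⟨x, hxB, y, hyB, hxney⟩
  obtain ⟨ℓ, ⟨hℓB, hℓmin⟩, heq⟩ := hLR B hcard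
  intro hcB
  have hℓy : ℓ ≠ y := by
    intro h
    have hzℓ : z ≠ ℓ := fun hh => hyA (by rw [← h, ← hh]; exact hz)
    have hf1 : f z ℓ := hℓmin z (by simp [hB, hz]) hzℓ
    rw [h] at hf1
    exact hasym y z hzprop.2 hf1
  have hℓmem : ℓ ∈ A ∨ ℓ = x := by
    have := hℓB
    simp only [hB, Finset.coe_union, Finset.coe_insert, Finset.coe_singleton,
      Set.mem_union, Set.mem_insert_iff, Set.mem_singleton_iff] at this
    rcases this with h | h | h
    · exact Or.inl h
    · exact Or.inr h
    · exact absurd h hℓy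
  rcases hℓmem with hℓA | hℓeqx
  · -- ℓ ∈ A
    have hℓx : ℓ ≠ x := fun h => hxA (h ▸ hℓA)
    by_cases hne : (A.erase ℓ).Nonempty
    · have hBe : B.erase ℓ = (A.erase ℓ) ∪ ({x, y} : Finset α) := by
        ext a
        simp only [hB, Finset.mem_erase, Finset.mem_union, Finset.mem_insert,
          Finset.mem_singleton]
        constructor
        · rintro ⟨ha, hb | hb | hb⟩
          · exact Or.inl ⟨ha, hb⟩
          · exact Or.inr (Or.inl hb)
          · exact Or.inr (Or.inr hb)
        · rintro (⟨ha, hb⟩ | hb | hb)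
          · exact ⟨ha, Or.inl hb⟩
          · exact ⟨fun hh => hℓx (hh.symm.trans hb), Or.inr (Or.inl hb)⟩
          · exact ⟨fun hh => hℓy (hh.symm.trans hb), Or.inr (Or.inr hb)⟩
      have hih : c ((A.erase ℓ) ∪ ({x, y} : Finset α)) ≠ y :=
        ih (A.erase ℓ) (Finset.erase_ssubset hℓA) hne
          (fun a ha => hsub (Finset.mem_of_mem_erase (by exact_mod_cast ha)))
      rw [hcB, hBe] at heq
      have : y ∈ ({c ((A.erase ℓ) ∪ ({x, y} : Finset α)), ℓ} : Finset α) := by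
        have h0 := hc ({c ((A.erase ℓ) ∪ ({x, y} : Finset α)), ℓ} : Finset α)
          ⟨_, Finset.mem_insert_self _ _⟩
        rwa [← heq] at h0
      simp only [Finset.mem_insert, Finset.mem_singleton] at this
      rcases this with h | h
      · exact hih h.symm
      · exact hℓy h.symm
    · -- A = {ℓ}
      have hAeq : A = {ℓ} := by
        rw [Finset.not_nonempty_iff_eq_empty] at hne
        ext a
        simp only [Finset.mem_singleton]
        constructor
        · intro ha
          by_contra hne'
          exact (Finset.eq_empty_iff_forall_notMem.mp hne a)
            (Finset.mem_erase.mpr ⟨hne', ha⟩)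
        · rintro rfl; exact hℓA
      have hBe : B.erase ℓ = ({x, y} : Finset α) := by
        ext a
        simp only [hB, hAeq, Finset.mem_erase, Finset.mem_union, Finset.mem_insert,
          Finset.mem_singleton]
        constructor
        · rintro ⟨ha, hb | hb | hb⟩
          · exact absurd hb ha
          · exact Or.inl hb
          · exact Or.inr hb
        · rintro (hb | hb)
          · exact ⟨fun hh => hℓx (hh.symm.trans hb), Or.inr (Or.inl hb)⟩
          · exact ⟨fun hh => hℓy (hh.symm.trans hb), Or.inr (Or.inr hb)⟩
      rw [hcB, hBe, hxy] at heq
      have : y ∈ ({x, ℓ} : Finset α) := by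
        rw [heq]; exact hc _ ⟨_, Finset.mem_insert_self _ _⟩
      simp only [Finset.mem_insert, Finset.mem_singleton] at this
      rcases this with h | h
      · exact hxney h.symm
      · exact hℓy h.symm
  · -- ℓ = x
    rw [hℓeqx] at heq
    rw [hcB] at heq
    have hmem : y ∈ ({c (B.erase x), x} : Finset α) := by
      rw [heq]; exact hc _ ⟨_, Finset.mem_insert_self _ _⟩
    simp only [Finset.mem_insert, Finset.mem_singleton] at hmem
    rcases hmem with h | h
    · rw [← h] at heq
      have : ({y, x} : Finset α) = {x, y} := Finset.pair_comm y x
      rw [this, hxy] at heq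
      exact hxney heq.symm
    · exact hxney h.symm
end

section
/- Let c be a choice function on a finite nonempty set X, let ψ^min(A) = D_A for each menu A, and let Rev be the relation on X defined by x Rev y iff there is a menu A with c(A) = x and y ∈ ψ^min(A)∖{x}. Then: (1) c satisfies Weak WARP if and only if Rev is asymmetric and max(ψ^min(A),Rev) = {c(A)} for every menu A; (2) Rev is acyclic if and only if there is a linear order ▷ on X with Rev ⊆ ▷ such that max(ψ^min(A),▷) = {c(A)} for every menu A. -/
variable {α : Type*}

/-- Acyclicity of a binary relation: no cycle x₁ ≻ x₂ ≻ ⋯ ≻ xₙ ≻ x₁. -/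
def AcyclicRel (r : α → α → Prop) : Prop := ∀ x : α, ¬ Relation.TransGen r x x

/-- x Rev y iff there is a menu A with c(A) = x and y ∈ ψ^min(A)∖{x}. -/
def RevRel (c : Finset α → α) (x y : α) : Prop :=
  ∃ A : Finset α, A.Nonempty ∧ c A = x ∧ y ∈ DSet c A ∧ y ≠ x

/-- Weak WARP. -/
def WeakWARP [DecidableEq α] (c : Finset α → α) : Prop :=
  ∀ A B : Finset α, A.Nonempty → A ⊆ B → ∀ x y : α, x ∈ A → y ∈ A → x ≠ y →
    c B = x → c ({x, y} : Finset α) = x → c A ≠ y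

/-- (1) c satisfies Weak WARP iff Rev is asymmetric and
max(ψ^min(A),Rev) = {c(A)} for every menu A; (2) Rev is acyclic iff there is a linear
order ▷ extending Rev with max(ψ^min(A),▷) = {c(A)} for every menu A. -/
theorem stmt_19 [Fintype α] [DecidableEq α] [Nonempty α]
    (c : Finset α → α) (hc : ∀ A : Finset α, A.Nonempty → c A ∈ A) :
    (WeakWARP c ↔
      ((∀ x y : α, RevRel c x y → ¬ RevRel c y x) ∧
        ∀ A : Finset α, A.Nonempty → maxSet (RevRel c) (DSet c A) = {c A})) ∧
    (AcyclicRel (RevRel c) ↔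
      (∃ rhd : α → α → Prop, IsLinearRel rhd ∧
        (∀ x y : α, RevRel c x y → rhd x y) ∧
        ∀ A : Finset α, A.Nonempty → maxSet rhd (DSet c A) = {c A})) := by
  have hmem : ∀ A : Finset α, A.Nonempty → c A ∈ DSet c A :=
    fun A hA => ⟨hc A hA, A, subset_rfl, rfl⟩
  have hdom : ∀ (A : Finset α), A.Nonempty → ∀ y ∈ DSet c A, y ≠ c A →
      RevRel c (c A) y := fun A hA y hy hne => ⟨A, hA, rfl, hy, hne⟩
  -- generic maxSet lemma: any asymmetric relation containing Rev works
  have hmax : ∀ (r : α → α → Prop), (∀ x y, RevRel c x y → r x y) →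
      (∀ x y, r x y → ¬ r y x) →
      ∀ A : Finset α, A.Nonempty → maxSet r (DSet c A) = {c A} := by
    intro r hext hasym A hA
    ext z
    simp only [maxSet, Set.mem_setOf_eq, Set.mem_singleton_iff]
    constructor
    · rintro ⟨hz, hmaxz⟩
      by_contra hne
      exact hmaxz (c A) (hmem A hA) (hext _ _ (hdom A hA z hz hne))
    · rintro rfl
      refine ⟨hmem A hA, fun w hw hrw => ?_⟩
      by_cases hwe : w = c A
      · subst hwe; exact hasym _ _ hrw hrw
      · exact hasym _ _ (hext _ _ (hdom A hA w hw hwe)) hrw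
  constructor
  · constructor
    · intro hW
      have hasym : ∀ x y : α, RevRel c x y → ¬ RevRel c y x := by
        rintro x y ⟨A, hA, hcA, ⟨hyA, B, hAB, hcB⟩, hyx⟩
          ⟨A', hA', hcA', ⟨hxA', B', hAB', hcB'⟩, hxy⟩
        have hpair : ({x, y} : Finset α).Nonempty := ⟨x, by simp⟩
        have := hc _ hpair
        rcases Finset.mem_insert.mp this with h | h
        · -- c {x,y} = x : contradict via A', B'
          exact hW A' B' hA' hAB' x y hxA' (hcA' ▸ hc A' hA') hxy hcB' h hcA'
        · -- c {x,y} = y : contradict via A, B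
          rw [Finset.mem_singleton] at h
          have h' : c ({y, x} : Finset α) = y := by rw [Finset.pair_comm y x]; exact h
          exact hW A B hA hAB y x hyA (hcA ▸ hc A hA) hyx hcB h' hcA
      exact ⟨hasym, hmax _ (fun _ _ h => h) hasym⟩
    · rintro ⟨hasym, -⟩ A B hA hAB x y hxA hyA hxy hcB hpair hcAy
      have hxRy : RevRel c x y := by
        refine ⟨{x, y}, ⟨x, by simp⟩, hpair, ⟨by simp, A, ?_, hcAy⟩, hxy.symm⟩
        exact Finset.insert_subset hxA (Finset.singleton_subset_iff.mpr hyA)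
      have hyRx : RevRel c y x := ⟨A, hA, hcAy, ⟨hxA, B, hAB, hcB⟩, hxy⟩
      exact hasym _ _ hxRy hyRx
  · constructor
    · intro hacyc
      -- extend the transitive closure to a linear order
      set t : α → α → Prop := Relation.TransGen (RevRel c) with ht
      have httrans : Transitive t := fun _ _ _ => Relation.TransGen.trans
      set s' : α → α → Prop := fun x y => t x y ∨ x = y with hs'
      haveI : IsPartialOrder α s' := by
        refine { refl := ?_, trans := ?_, antisymm := ?_ }
        · exact fun x => Or.inr rfl
        · rintro x y z (h1 | rfl) (h2 | rfl)
          · exact Or.inl (httrans h1 h2)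
          · exact Or.inl h1
          · exact Or.inl h2
          · exact Or.inr rfl
        · rintro x y (h1 | rfl) (h2 | h2)
          · exact absurd (httrans h1 h2) (hacyc x)
          · exact h2.symm
          · rfl
          · rfl
      obtain ⟨s, hlin, hle⟩ := extend_partialOrder s'
      haveI := hlin
      set rhd : α → α → Prop := fun x y => s x y ∧ x ≠ y with hrhd
      have hasym : ∀ x y, rhd x y → ¬ rhd y x := by
        rintro x y ⟨h1, hne⟩ ⟨h2, -⟩
        exact hne (hlin.toIsPartialOrder.toAntisymm.antisymm _ _ h1 h2)
      have hext : ∀ x y, RevRel c x y → rhd x y := by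
        intro x y h
        have hne : x ≠ y := by
          rintro rfl; exact hacyc x (Relation.TransGen.single h)
        exact ⟨hle _ _ (Or.inl (Relation.TransGen.single h)), hne⟩
      refine ⟨rhd, ⟨hasym, ?_, ?_⟩, hext, hmax rhd hext hasym⟩
      · rintro x y z ⟨h1, hxy⟩ ⟨h2, hyz⟩
        refine ⟨hlin.toIsPartialOrder.toIsPreorder.toIsTrans.trans _ _ _ h1 h2, ?_⟩
        rintro rfl
        exact hxy (hlin.toIsPartialOrder.toAntisymm.antisymm _ _ h1 h2)
      · intro x y hne
        rcases hlin.toTotal.total x y with h | h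
        · exact Or.inl ⟨h, hne⟩
        · exact Or.inr ⟨h, hne.symm⟩
    · rintro ⟨rhd, ⟨hasym, htrans, -⟩, hext, -⟩ x hx
      have hrt : Transitive rhd := fun a b c' => htrans a b c'
      have : rhd x x := by
        have := Relation.TransGen.mono hext _ _ hx
        rwa [@Relation.transGen_eq_self α rhd ⟨fun _ _ _ h1 h2 => hrt h1 h2⟩] at this
      exact hasym _ _ this this
end
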